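/- arXiv:2306.09948 — 8 statements merged into one kernel-verified Lean document; each statement's English description precedes it below -/
import Mathlib

section
/- Let m, n, h, k be positive integers with h ≤ n and k ≤ m. There exists a NASM(m,n;h,k), i.e., an m×n near alternating sign matrix having exactly h nonzero entries in every row and exactly k nonzero entries in every column, if and only if mh = nk. -/
def rowWeight {α : Type*} [Zero α] [DecidableEq α] {m n : ℕ}
    (A : Matrix (Fin m) (Fin n) α) (i : Fin m) : ℕ :=
  (Finset.univ.filter (fun j => A i j ≠ 0)).card

def colWeight {α : Type*} [Zero α] [DecidableEq α] {m n : ℕ}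
    (A : Matrix (Fin m) (Fin n) α) (j : Fin n) : ℕ :=
  (Finset.univ.filter (fun i => A i j ≠ 0)).card

/-- The nonzero entries of the sequence `r` alternate in sign. -/
def AltSigns {n : ℕ} (r : Fin n → ℤ) : Prop :=
  ∀ j j' : Fin n, j < j' → r j ≠ 0 → r j' ≠ 0 →
    (∀ l : Fin n, j < l → l < j' → r l = 0) → r j' = -(r j)

/-- A near alternating sign matrix: entries in `{0, 1, -1}`, and in every row and
every column the nonzero entries alternate in sign. -/
def IsNASM {m n : ℕ} (A : Matrix (Fin m) (Fin n) ℤ) : Prop :=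
  (∀ i j, A i j = 0 ∨ A i j = 1 ∨ A i j = -1) ∧
  (∀ i : Fin m, AltSigns (fun j => A i j)) ∧
  (∀ j : Fin n, AltSigns (fun i => A i j))

/-!
Double counting the nonzero entries gives `m * h = n * k`. Conversely, let `f t = ⌊t h / n⌋`,
which increases by `0` or `1` at each step since `h ≤ n`, and take the Hankel matrix
`A i j = W (i + j + 1) - W (i + j)` of the difference sequence of the 0/1 word `W = f mod 2`.
Between two consecutive changes of a 0/1 word the word is constant, so the nonzero differences
alternate in sign along every row and column. Row `i` counts the increments of `f` on
`[i, i + n)`, i.e. `f (i + n) - f i = h`, and column `j` those on `[j, j + m)`, i.e.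
`f (j + m) - f j = m h / n = k`.
-/

open Finset

theorem sum_rowWeight_eq_sum_colWeight {α : Type*} [Zero α] [DecidableEq α] {m n : ℕ}
    (A : Matrix (Fin m) (Fin n) α) : ∑ i, rowWeight A i = ∑ j, colWeight A j := by
  simp only [rowWeight, colWeight, card_filter]
  exact sum_comm

theorem eq_of_sub_eq_zero_on_Ico {W : ℕ → ℤ} {p q : ℕ} (hpq : p ≤ q)
    (hconst : ∀ t, p ≤ t → t < q → W (t + 1) - W t = 0) : W q = W p := by
  induction q, hpq using Nat.le_induction with
  | base => rfl
  | succ q hpq ih =>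
    rw [sub_eq_zero.mp (hconst q hpq (by omega)), ih fun t h1 h2 => hconst t h1 (by omega)]

theorem altSigns_window_sub {W : ℕ → ℤ} (hW : ∀ t, W t = 0 ∨ W t = 1) (a L : ℕ) :
    AltSigns (fun j : Fin L => W (a + j + 1) - W (a + j)) := by
  intro j j' hjj' hj hj' hbetween
  have hlt : (j : ℕ) < j' := hjj'
  have hconst : W (a + j') = W (a + j + 1) := by
    refine eq_of_sub_eq_zero_on_Ico (by omega) fun t h1 h2 => ?_
    obtain ⟨u, rfl⟩ : ∃ u, t = a + u := ⟨t - a, by omega⟩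
    exact hbetween ⟨u, by omega⟩ (Fin.lt_def.mpr (by simp only; omega))
      (Fin.lt_def.mpr (by simp only; omega))
  simp only at hj hj' ⊢
  rcases hW (a + j) with h0 | h0 <;> rcases hW (a + j + 1) with h1 | h1 <;>
    rcases hW (a + j' + 1) with h2 | h2 <;> simp_all

def hankelDiff (W : ℕ → ℤ) (m n : ℕ) : Matrix (Fin m) (Fin n) ℤ :=
  fun i j => W (i + j + 1) - W (i + j)

theorem isNASM_hankelDiff {W : ℕ → ℤ} (hW : ∀ t, W t = 0 ∨ W t = 1) (m n : ℕ) :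
    IsNASM (hankelDiff W m n) := by
  refine ⟨fun i j => ?_, fun i => altSigns_window_sub hW i n, fun j => ?_⟩
  · rcases hW (i + j) with h0 | h0 <;> rcases hW (i + j + 1) with h1 | h1 <;>
      simp [hankelDiff, h0, h1]
  · simpa only [hankelDiff, Nat.add_comm _ (j : ℕ)] using altSigns_window_sub hW j m

def parityWord (f : ℕ → ℕ) (t : ℕ) : ℤ := (f t : ℤ) % 2

theorem parityWord_eq_zero_or_one (f : ℕ → ℕ) (t : ℕ) :
    parityWord f t = 0 ∨ parityWord f t = 1 :=
  Int.emod_two_eq_zero_or_one _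

section UnitSteps

variable {f : ℕ → ℕ} (hf : ∀ t, f (t + 1) = f t ∨ f (t + 1) = f t + 1)
include hf

theorem parityWord_sub_ne_zero_iff (t : ℕ) :
    parityWord f (t + 1) - parityWord f t ≠ 0 ↔ f (t + 1) = f t + 1 := by
  unfold parityWord
  rcases hf t with h | h <;> rw [h] <;> push_cast <;> omega

theorem card_parityWord_changes_window (a L : ℕ) :
    (univ.filter fun j : Fin L => parityWord f (a + j + 1) - parityWord f (a + j) ≠ 0).card
      = f (a + L) - f a := by
  have hmono : Monotone fun t => f (a + t) :=
    monotone_nat_of_le_succ fun t => show f (a + t) ≤ f (a + t + 1) by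
      rcases hf (a + t) with h | h <;> omega
  have htele := sum_range_tsub hmono L
  simp only [Nat.add_zero] at htele
  rw [card_filter, ← htele, ← Fin.sum_univ_eq_sum_range]
  refine sum_congr rfl fun j _ => ?_
  simp only [parityWord_sub_ne_zero_iff hf]
  rcases hf (a + j) with h | h <;> simp [← Nat.add_assoc, h]

theorem rowWeight_hankelDiff_parityWord (m n : ℕ) (i : Fin m) :
    rowWeight (hankelDiff (parityWord f) m n) i = f (i + n) - f i :=
  card_parityWord_changes_window hf i n

theorem colWeight_hankelDiff_parityWord (m n : ℕ) (j : Fin n) :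
    colWeight (hankelDiff (parityWord f) m n) j = f (j + m) - f j := by
  simpa only [colWeight, hankelDiff, Nat.add_comm _ (j : ℕ)] using
    card_parityWord_changes_window hf j m

end UnitSteps

theorem succ_mul_div_eq_or_eq_add_one {n h : ℕ} (hn : 0 < n) (hhn : h ≤ n) (t : ℕ) :
    (t + 1) * h / n = t * h / n ∨ (t + 1) * h / n = t * h / n + 1 := by
  have hle : t * h / n ≤ (t + 1) * h / n := Nat.div_le_div_right (by gcongr; omega)
  have hge : (t + 1) * h / n ≤ t * h / n + 1 := by
    rw [← Nat.add_div_right _ hn]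
    exact Nat.div_le_div_right (by rw [add_mul]; omega)
  omega

theorem statement0_general (m n h k : ℕ) (hn : 0 < n) (hhn : h ≤ n) :
    (∃ A : Matrix (Fin m) (Fin n) ℤ, IsNASM A ∧
        (∀ i, rowWeight A i = h) ∧ (∀ j, colWeight A j = k)) ↔ m * h = n * k := by
  constructor
  · rintro ⟨A, -, hrow, hcol⟩
    simpa only [hrow, hcol, sum_const, card_univ, Fintype.card_fin, smul_eq_mul] using
      sum_rowWeight_eq_sum_colWeight A
  · intro hmh
    have hf := succ_mul_div_eq_or_eq_add_one hn hhn
    refine ⟨hankelDiff (parityWord fun t => t * h / n) m n,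
      isNASM_hankelDiff (parityWord_eq_zero_or_one _) m n, fun i => ?_, fun j => ?_⟩
    · rw [rowWeight_hankelDiff_parityWord hf, add_mul, Nat.add_mul_div_left _ _ hn]
      omega
    · rw [colWeight_hankelDiff_parityWord hf, add_mul, hmh, Nat.add_mul_div_left _ _ hn]
      omega

/-- For positive integers `m, n, h, k` with `h ≤ n` and `k ≤ m`,
there exists a NASM`(m, n; h, k)` if and only if `m * h = n * k`. -/
theorem statement0 (m n h k : ℕ) (hm : 0 < m) (hn : 0 < n) (hh : 0 < h) (hk : 0 < k)
    (hhn : h ≤ n) (hkm : k ≤ m) :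
    (∃ A : Matrix (Fin m) (Fin n) ℤ, IsNASM A ∧
        (∀ i, rowWeight A i = h) ∧ (∀ j, colWeight A j = k)) ↔ m * h = n * k :=
  statement0_general m n h k hn hhn
end

section
/- Let h_1,…,h_m and k_1,…,k_n be positive integers with h_1+⋯+h_m = k_1+⋯+k_n. Set 𝐇 = (2h_1,2h_1,2h_2,2h_2,…,2h_m,2h_m) (a sequence of length 2m in which each 2h_i appears twice consecutively) and 𝐊 = (2k_1,2k_1,…,2k_n,2k_n) (length 2n). Then there exists a NASM(2m,2n;𝐇,𝐊) if and only if the sequences 𝐇 and 𝐊 satisfy the Gale–Ryser condition. -/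
/-- The decreasing rearrangement of the tuple `k`. -/
def decRearrange {n : ℕ} (k : Fin n → ℕ) : Fin n → ℕ :=
  fun j => k (Tuple.sort k j.rev)

/-- The Gale–Ryser condition for the sequences `h` and `k`. -/
def GaleRyser {m n : ℕ} (h : Fin m → ℕ) (k : Fin n → ℕ) : Prop :=
  ∀ u : ℕ, 1 ≤ u → u ≤ n →
    ∑ j ∈ Finset.univ.filter (fun j : Fin n => (j : ℕ) < u), decRearrange k j
      ≤ ∑ i : Fin m, min (h i) u

/-- The sequence `(h 0, h 0, h 1, h 1, …, h (m-1), h (m-1))` of length `2 * m`. -/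
def twice {m : ℕ} (h : Fin m → ℕ) : Fin (2 * m) → ℕ :=
  fun i => h ⟨(i : ℕ) / 2, by have := i.isLt; omega⟩

/-!
Necessity holds for every matrix: a set `T` of columns meets row `i` in at most
`min (h i) #T` nonzero entries. The Gale–Ryser condition is equivalent to this bound for all
column sets `T`, because the `u` largest entries of `k` have the largest sum among `u`-subsets.

For sufficiency, the bound for the doubled sequences at `2 * #T` columns is four times the bound
for `h, k` at `#T` columns. Ryser's greedy construction (put the ones of a column into the rows
of largest remaining `h`) then gives a `0/1`-matrix `B` with row sums `h` and column sums `k`.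
Replacing every `1` of `B` by `!![1, -1; -1, 1]` and every `0` by a zero block gives the NASM:
the nonzero entries of each row or column come in adjacent pairs `+-` or `-+`, the same for all
pairs of that row or column.
-/

open Finset

section GaleRyser

variable {ι κ : Type*}

def GaleRyserSets [Fintype ι] (h : ι → ℕ) (k : κ → ℕ) : Prop :=
  ∀ T : Finset κ, ∑ j ∈ T, k j ≤ ∑ i, min (h i) #T

lemma exists_card_eq_forall_notMem_le [Fintype ι] [DecidableEq ι] (h : ι → ℕ) {s : ℕ}
    (hs : s ≤ Fintype.card ι) :
    ∃ R : Finset ι, #R = s ∧ ∀ i ∈ R, ∀ i' ∉ R, h i' ≤ h i := by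
  induction s with
  | zero => exact ⟨∅, rfl, by simp⟩
  | succ s ih =>
    obtain ⟨R, hcard, hdom⟩ := ih (by omega)
    have hne : Rᶜ.Nonempty := by
      rw [← card_pos, card_compl, hcard]
      omega
    obtain ⟨a, haR, hamax⟩ := exists_max_image Rᶜ h hne
    rw [mem_compl] at haR
    refine ⟨insert a R, by rw [card_insert_of_notMem haR, hcard], ?_⟩
    intro i hi i' hi'
    rw [mem_insert, not_or] at hi'
    rcases mem_insert.1 hi with rfl | hiR
    · exact hamax i' (mem_compl.2 hi'.2)
    · exact hdom i hiR i' hi'.2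

lemma sum_tsub_indicator_add_card [Fintype ι] [DecidableEq ι] {h : ι → ℕ} {R : Finset ι}
    (hR : ∀ i ∈ R, 0 < h i) : ∑ i, (h i - if i ∈ R then 1 else 0) + #R = ∑ i, h i := by
  have hcard : ∑ i, (if i ∈ R then 1 else 0) = #R := by simp
  rw [← hcard, ← sum_add_distrib]
  refine sum_congr rfl fun i _ => ?_
  by_cases hi : i ∈ R
  · have := hR i hi
    simp only [hi, if_true]
    omega
  · simp [hi]

namespace GaleRyserSets

variable [Fintype ι] {h : ι → ℕ} {k : κ → ℕ}

lemma le_card (hgr : GaleRyserSets h k) (j : κ) : k j ≤ Fintype.card ι := by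
  simpa using (hgr {j}).trans (sum_le_sum fun i _ => min_le_right (h i) 1)

lemma pos_of_mem [DecidableEq ι] (hgr : GaleRyserSets h k) {j₀ : κ} {R : Finset ι}
    (hR : #R = k j₀) (hdom : ∀ i ∈ R, ∀ i' ∉ R, h i' ≤ h i) : ∀ i ∈ R, 0 < h i := by
  intro i₀ hi₀
  by_contra! hzero
  have hle : ∀ i, min (h i) 1 ≤ if i ∈ R.erase i₀ then 1 else 0 := by
    intro i
    by_cases hi : i ∈ R.erase i₀
    · simp [hi]
    · have : h i = 0 := by
        rcases eq_or_ne i i₀ with rfl | hne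
        · omega
        · have := hdom i₀ hi₀ i (by simpa [hne] using hi)
          omega
      simp [this]
  have hcount : #R ≤ #R - 1 := by
    calc #R = ∑ j ∈ {j₀}, k j := by simp [hR]
      _ ≤ ∑ i, min (h i) 1 := hgr {j₀}
      _ ≤ ∑ i, if i ∈ R.erase i₀ then 1 else 0 := sum_le_sum fun i _ => hle i
      _ = #R - 1 := by rw [sum_boole, filter_univ_mem, Nat.cast_id, card_erase_of_mem hi₀]
  have := card_pos.2 ⟨i₀, hi₀⟩
  omega

/-- Ryser's step: column `j₀` gets its ones in the rows of `R`, the `k j₀` rows of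
largest `h`. -/
lemma reduce [DecidableEq ι] [DecidableEq κ] (hgr : GaleRyserSets h k) {j₀ : κ} {R : Finset ι}
    (hR : #R = k j₀) (hdom : ∀ i ∈ R, ∀ i' ∉ R, h i' ≤ h i) :
    GaleRyserSets (fun i => h i - if i ∈ R then 1 else 0) (Function.update k j₀ 0) := by
  have hpos := hgr.pos_of_mem hR hdom
  have hnotMem : ∀ T : Finset κ, j₀ ∉ T →
      ∑ j ∈ T, k j ≤ ∑ i, min (h i - if i ∈ R then 1 else 0) #T := by
    intro T hT
    by_cases hbig : ∀ i ∈ R, #T < h i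
    · calc ∑ j ∈ T, k j ≤ ∑ i, min (h i) #T := hgr T
        _ = _ := sum_congr rfl fun i _ => by
            by_cases hi : i ∈ R
            · have := hbig i hi
              simp only [hi, if_true]
              omega
            · simp [hi]
    -- otherwise every row outside `R` has `h i ≤ #T`; compare with the bound for `insert j₀ T`
    push Not at hbig
    obtain ⟨i₀, hi₀, hsmall⟩ := hbig
    have hpt : ∀ i, min (h i) (#T + 1) ≤
        min (h i - if i ∈ R then 1 else 0) #T + if i ∈ R then 1 else 0 := by
      intro i
      by_cases hi : i ∈ R
      · have := hpos i hi
        simp only [hi, if_true]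
        omega
      · have := hdom i₀ hi₀ i hi
        simp only [hi, if_false]
        omega
    have hins := hgr (insert j₀ T)
    rw [sum_insert hT, card_insert_of_notMem hT] at hins
    have hsum := sum_le_sum fun i (_ : i ∈ univ) => hpt i
    rw [sum_add_distrib, sum_boole, filter_univ_mem, Nat.cast_id, hR] at hsum
    omega
  intro T
  by_cases hT : j₀ ∈ T
  · rw [sum_update_of_mem hT, zero_add]
    calc _ ≤ _ := hnotMem (T \ {j₀}) (by simp)
      _ ≤ _ := sum_le_sum fun i _ => min_le_min_left _ (card_le_card sdiff_subset)
  · rw [sum_update_of_notMem hT]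
    exact hnotMem T hT

theorem exists_zero_one_matrix [DecidableEq ι] [Fintype κ] [DecidableEq κ]
    (hgr : GaleRyserSets h k) (hsum : ∑ i, h i = ∑ j, k j) :
    ∃ B : Matrix ι κ ℕ, (∀ i j, B i j ≤ 1) ∧ (∀ i, ∑ j, B i j = h i) ∧
      (∀ j, ∑ i, B i j = k j) := by
  induction hN : ∑ j, k j using Nat.strong_induction_on generalizing h k with
  | _ N ih =>
    by_cases hk : ∀ j, k j = 0
    · have hh : ∀ i, h i = 0 := by
        simpa [hk, sum_eq_zero_iff] using hsum
      exact ⟨0, by simp, by simp [hh], by simp [hk]⟩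
    push Not at hk
    obtain ⟨j₀, hj₀⟩ := hk
    obtain ⟨R, hR, hdom⟩ := exists_card_eq_forall_notMem_le h (hgr.le_card j₀)
    have hpos := hgr.pos_of_mem hR hdom
    have hsum_h := sum_tsub_indicator_add_card hpos
    have hsum_k : ∑ j, Function.update k j₀ 0 j + k j₀ = ∑ j, k j := by
      rw [sum_update_of_mem (mem_univ j₀), zero_add, ← sum_erase_add _ _ (mem_univ j₀),
        sdiff_singleton_eq_erase]
    obtain ⟨B, hB01, hBrow, hBcol⟩ := ih _ (by omega) (hgr.reduce hR hdom) (by omega) rfl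
    have hBj₀ : ∀ i, B i j₀ = 0 := by
      simpa [sum_eq_zero_iff] using hBcol j₀
    refine ⟨fun i j => B i j + if j = j₀ ∧ i ∈ R then 1 else 0, fun i j => ?_, fun i => ?_,
      fun j => ?_⟩
    · by_cases hj : j = j₀ <;> by_cases hi : i ∈ R <;> simp [hj, hi, hBj₀, hB01]
    · have := hpos i
      by_cases hi : i ∈ R <;> simp [sum_add_distrib, hBrow, hi] at this ⊢
      omega
    · by_cases hj : j = j₀ <;> simp [sum_add_distrib, hBcol, hj, hR]

end GaleRyserSets

end GaleRyser

lemma Antitone.sum_le_sum_val_lt_card {M : Type*} [AddCommMonoid M] [Preorder M]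
    [IsOrderedCancelAddMonoid M] {N : ℕ} {g : Fin N → M} (hg : Antitone g)
    (P : Finset (Fin N)) :
    ∑ j ∈ P, g j ≤ ∑ j ∈ univ.filter (fun j : Fin N => (j : ℕ) < #P), g j := by
  set F := univ.filter fun j : Fin N => (j : ℕ) < #P
  have hF : #F = #P := by
    simpa [F, Fin.card_filter_val_lt] using P.card_le_univ
  rw [← sum_sdiff_le_sum_sdiff]
  rcases (P \ F).eq_empty_or_nonempty with hPF | ⟨x, hx⟩
  · have hFP : F \ P = ∅ := by
      rw [← card_eq_zero, ← card_sdiff_comm hF.symm, hPF, card_empty]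
    simp [hPF, hFP]
  have hc : #P < N := by
    simp only [F, mem_sdiff, mem_filter, mem_univ, true_and, not_lt] at hx
    omega
  have hge : ∀ x ∈ P \ F, g x ≤ g ⟨#P, hc⟩ := by
    intro x hx
    simp only [F, mem_sdiff, mem_filter, mem_univ, true_and, not_lt] at hx
    exact hg (Fin.mk_le_of_le_val hx.2)
  have hle : ∀ y ∈ F \ P, g ⟨#P, hc⟩ ≤ g y := by
    intro y hy
    simp only [F, mem_sdiff, mem_filter, mem_univ, true_and] at hy
    exact hg (Fin.le_def.2 hy.1.le)
  calc ∑ j ∈ P \ F, g j ≤ #(P \ F) • g ⟨#P, hc⟩ := sum_le_card_nsmul _ _ _ hge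
    _ = #(F \ P) • g ⟨#P, hc⟩ := by rw [card_sdiff_comm hF.symm]
    _ ≤ ∑ j ∈ F \ P, g j := card_nsmul_le_sum _ _ _ hle

lemma antitone_decRearrange {n : ℕ} (k : Fin n → ℕ) : Antitone (decRearrange k) :=
  (Tuple.monotone_sort k).comp_antitone Fin.rev_anti

lemma sum_le_sum_decRearrange {n : ℕ} (k : Fin n → ℕ) (T : Finset (Fin n)) :
    ∑ j ∈ T, k j ≤
      ∑ j ∈ univ.filter (fun j : Fin n => (j : ℕ) < #T), decRearrange k j := by
  let e : Fin n ≃ Fin n := Fin.revPerm.trans (Tuple.sort k)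
  have hT : ∑ j ∈ T, k j = ∑ j ∈ T.map e.symm.toEmbedding, decRearrange k j := by
    rw [sum_map]
    simp [decRearrange, e]
  rw [hT]
  simpa using (antitone_decRearrange k).sum_le_sum_val_lt_card (T.map e.symm.toEmbedding)

lemma galeRyser_iff_galeRyserSets {m n : ℕ} (h : Fin m → ℕ) (k : Fin n → ℕ) :
    GaleRyser h k ↔ GaleRyserSets h k := by
  constructor
  · intro hgr T
    rcases T.eq_empty_or_nonempty with rfl | hT
    · simp
    exact (sum_le_sum_decRearrange k T).trans
      (hgr #T hT.card_pos (T.card_le_univ.trans_eq (Fintype.card_fin n)))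
  · intro hgr u _ hun
    let e : Fin n ↪ Fin n := (Fin.revPerm.trans (Tuple.sort k)).toEmbedding
    set F := univ.filter fun j : Fin n => (j : ℕ) < u
    have hcard : #(F.map e) = u := by
      simpa [F, Fin.card_filter_val_lt] using hun
    calc ∑ j ∈ F, decRearrange k j = ∑ j ∈ F.map e, k j := by
          rw [sum_map]
          rfl
      _ ≤ ∑ i, min (h i) u := (hgr _).trans_eq (by rw [hcard])

lemma galeRyserSets_rowWeight_colWeight {α : Type*} [Zero α] [DecidableEq α] {m n : ℕ}
    (A : Matrix (Fin m) (Fin n) α) : GaleRyserSets (rowWeight A) (colWeight A) := by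
  intro T
  calc ∑ j ∈ T, colWeight A j = ∑ i, #{j ∈ T | A i j ≠ 0} := by
        simp only [colWeight, card_filter]
        exact sum_comm
    _ ≤ ∑ i, min (rowWeight A i) #T := sum_le_sum fun i _ =>
        le_min (card_le_card (filter_subset_filter _ (subset_univ T)))
          (card_le_card (filter_subset _ _))

def Fin.half {m : ℕ} (i : Fin (2 * m)) : Fin m := ⟨i / 2, by omega⟩

lemma twice_eq_comp_half {m : ℕ} (h : Fin m → ℕ) : twice h = h ∘ Fin.half := rfl

lemma Fin.sum_comp_half {M : Type*} [AddCommMonoid M] {m : ℕ} (f : Fin m → M) :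
    ∑ i : Fin (2 * m), f i.half = 2 • ∑ i, f i := by
  let e : Fin m × Fin 2 ≃ Fin (2 * m) := finProdFinEquiv.trans (finCongr (mul_comm m 2))
  have he : ∀ p, (e p).half = p.1 := by
    rintro ⟨t, b⟩
    ext
    simp [e, Fin.half]
    omega
  rw [← e.sum_comp, Fintype.sum_prod_type, Finset.smul_sum]
  simp only [he, Fin.sum_univ_two, two_nsmul]

lemma Fin.card_filter_half {m : ℕ} (p : Fin m → Prop) [DecidablePred p] :
    #{i : Fin (2 * m) | p i.half} = 2 * #{t | p t} := by
  rw [card_filter, card_filter]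
  exact (Fin.sum_comp_half fun t => if p t then 1 else 0).trans (smul_eq_mul ..)

lemma GaleRyserSets.of_double_twice {m n : ℕ} {h : Fin m → ℕ} {k : Fin n → ℕ}
    (hgr : GaleRyserSets (fun i => 2 * twice h i) (fun j => 2 * twice k j)) :
    GaleRyserSets h k := by
  intro T
  have hcard : #{j : Fin (2 * n) | j.half ∈ T} = 2 * #T := by
    simpa using Fin.card_filter_half (· ∈ T)
  have hk : ∑ j ∈ {j : Fin (2 * n) | j.half ∈ T}, 2 * twice k j = 4 * ∑ j ∈ T, k j := by
    calc _ = ∑ j : Fin (2 * n), (fun t => if t ∈ T then 2 * k t else 0) j.half := by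
          rw [sum_filter]
          rfl
      _ = 4 * ∑ j ∈ T, k j := by
          rw [Fin.sum_comp_half fun t => if t ∈ T then 2 * k t else 0, smul_eq_mul, sum_ite_mem,
            univ_inter, ← mul_sum]
          ring
  have hh : ∑ i, min (2 * twice h i) (2 * #T) = 4 * ∑ i, min (h i) #T := by
    calc _ = ∑ i : Fin (2 * m), (fun t => 2 * min (h t) #T) i.half :=
          sum_congr rfl fun i _ => by
            simp only [twice_eq_comp_half, Function.comp_apply]
            omega
      _ = 4 * ∑ i, min (h i) #T := by
          rw [Fin.sum_comp_half fun t => 2 * min (h t) #T, smul_eq_mul, ← mul_sum]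
          ring
  have := hgr {j | j.half ∈ T}
  rw [hcard, hk, hh] at this
  omega

lemma altSigns_of_pairs {n : ℕ} (c : Fin n → ℕ) (hc : ∀ t, c t ≤ 1) (a : ℕ) :
    AltSigns (fun j : Fin (2 * n) => (c j.half : ℤ) * (-1) ^ (a + j)) := by
  intro j j' hjj' hj hj' hgap
  simp only [ne_eq, mul_eq_zero, Nat.cast_eq_zero, pow_eq_zero_iff', neg_eq_zero, one_ne_zero,
    false_and, or_false] at hj hj' hgap
  rw [Fin.lt_def] at hjj'
  -- nonzero entries come in adjacent pairs `2t, 2t + 1`, so a gap of zeros has even length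
  have hodd : Odd ((j' : ℕ) - j) := by
    rw [Nat.odd_iff]
    by_contra heven
    obtain ⟨l, hjl, hlj', hl⟩ : ∃ l : Fin (2 * n), j < l ∧ l < j' ∧ c l.half ≠ 0 := by
      by_cases hje : (j : ℕ) % 2 = 0
      · refine ⟨⟨j + 1, by omega⟩, Fin.lt_def.2 (by simp),
          Fin.lt_def.2 (by simp; omega), ?_⟩
        rwa [show Fin.half ⟨j + 1, _⟩ = j.half from Fin.ext (by simp [Fin.half]; omega)]
      · refine ⟨⟨j' - 1, by omega⟩, Fin.lt_def.2 (by simp; omega),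
          Fin.lt_def.2 (by simp; omega), ?_⟩
        rwa [show Fin.half ⟨j' - 1, _⟩ = j'.half from Fin.ext (by simp [Fin.half]; omega)]
    exact hl (hgap l hjl hlj')
  have h1 : c j.half = 1 := by have := hc j.half; omega
  have h1' : c j'.half = 1 := by have := hc j'.half; omega
  simp only [h1, h1', Nat.cast_one, one_mul]
  rw [show a + (j' : ℕ) = a + j + (j' - j) by omega, pow_add, hodd.neg_one_pow, mul_neg_one]

def blowUp {m n : ℕ} (B : Matrix (Fin m) (Fin n) ℕ) : Matrix (Fin (2 * m)) (Fin (2 * n)) ℤ :=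
  Matrix.of fun i j => B i.half j.half * (-1) ^ ((i : ℕ) + j)

lemma blowUp_ne_zero_iff {m n : ℕ} (B : Matrix (Fin m) (Fin n) ℕ) (i : Fin (2 * m))
    (j : Fin (2 * n)) : blowUp B i j ≠ 0 ↔ B i.half j.half ≠ 0 := by
  simp [blowUp]

lemma isNASM_blowUp {m n : ℕ} {B : Matrix (Fin m) (Fin n) ℕ} (hB : ∀ i j, B i j ≤ 1) :
    IsNASM (blowUp B) := by
  refine ⟨fun i j => ?_, fun i => altSigns_of_pairs _ (hB i.half) i, fun j => ?_⟩
  · rcases Nat.le_one_iff_eq_zero_or_eq_one.1 (hB i.half j.half) with h0 | h1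
    · simp [blowUp, h0]
    · simp [blowUp, h1, neg_one_pow_eq_or]
  · simpa only [blowUp, Matrix.of_apply, add_comm (_ : ℕ) (j : ℕ)] using
      altSigns_of_pairs (fun t => B t j.half) (fun t => hB t j.half) j

lemma card_filter_ne_zero_eq_sum_of_le_one {ι : Type*} [Fintype ι] (c : ι → ℕ)
    (hc : ∀ t, c t ≤ 1) :
    #{t | c t ≠ 0} = ∑ t, c t := by
  rw [card_filter]
  exact sum_congr rfl fun t _ => by have := hc t; split_ifs <;> omega

lemma rowWeight_blowUp {m n : ℕ} {B : Matrix (Fin m) (Fin n) ℕ} (hB : ∀ i j, B i j ≤ 1)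
    (i : Fin (2 * m)) : rowWeight (blowUp B) i = 2 * ∑ j, B i.half j := by
  simp only [rowWeight, blowUp_ne_zero_iff]
  rw [Fin.card_filter_half (fun t => B i.half t ≠ 0),
    card_filter_ne_zero_eq_sum_of_le_one _ (hB i.half)]

lemma colWeight_blowUp {m n : ℕ} {B : Matrix (Fin m) (Fin n) ℕ} (hB : ∀ i j, B i j ≤ 1)
    (j : Fin (2 * n)) : colWeight (blowUp B) j = 2 * ∑ i, B i j.half := by
  simp only [colWeight, blowUp_ne_zero_iff]
  rw [Fin.card_filter_half (fun t => B t j.half ≠ 0),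
    card_filter_ne_zero_eq_sum_of_le_one _ (hB · j.half)]

theorem statement2_general (m n : ℕ) (h : Fin m → ℕ) (k : Fin n → ℕ)
    (hsum : ∑ i, h i = ∑ j, k j) :
    (∃ A : Matrix (Fin (2 * m)) (Fin (2 * n)) ℤ, IsNASM A ∧
        (∀ i, rowWeight A i = 2 * twice h i) ∧ (∀ j, colWeight A j = 2 * twice k j)) ↔
      GaleRyser (fun i => 2 * twice h i) (fun j => 2 * twice k j) := by
  rw [galeRyser_iff_galeRyserSets]
  constructor
  · rintro ⟨A, -, hrow, hcol⟩
    have hA := galeRyserSets_rowWeight_colWeight A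
    rwa [funext hrow, funext hcol] at hA
  · intro hgr
    obtain ⟨B, hB, hBrow, hBcol⟩ := hgr.of_double_twice.exists_zero_one_matrix hsum
    refine ⟨blowUp B, isNASM_blowUp hB, fun i => ?_, fun j => ?_⟩
    · rw [rowWeight_blowUp hB, hBrow]
      rfl
    · rw [colWeight_blowUp hB, hBcol]
      rfl

/-- For positive integers `h_1, …, h_m` and `k_1, …, k_n` with equal sums,
there exists a NASM`(2m, 2n; 𝐇, 𝐊)` — where `𝐇 = (2h_1, 2h_1, …, 2h_m, 2h_m)` and
`𝐊 = (2k_1, 2k_1, …, 2k_n, 2k_n)` — if and only if `𝐇` and `𝐊` satisfy the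
Gale–Ryser condition. -/
theorem statement2 (m n : ℕ) (h : Fin m → ℕ) (k : Fin n → ℕ)
    (hpos : ∀ i, 0 < h i) (kpos : ∀ j, 0 < k j)
    (hsum : ∑ i, h i = ∑ j, k j) :
    (∃ A : Matrix (Fin (2 * m)) (Fin (2 * n)) ℤ, IsNASM A ∧
        (∀ i, rowWeight A i = 2 * twice h i) ∧ (∀ j, colWeight A j = 2 * twice k j)) ↔
      GaleRyser (fun i => 2 * twice h i) (fun j => 2 * twice k j) :=
  statement2_general m n h k hsum
end

section
/- Let A_1 be an m×n_1 NASM and A_2 an m×n_2 NASM, and assume that every row of A_1 and every row of A_2 contains at least one nonzero entry. Then the horizontal concatenation [A_1 A_2] (the m×(n_1+n_2) matrix whose first n_1 columns are A_1 and last n_2 columns are A_2) is a NASM if and only if A_1^→ = -A_2^←. In that case, [A_1 A_2] is a NASM(m,n_1+n_2; w_r(A_1)+w_r(A_2), (w_c(A_1),w_c(A_2))), i.e., its row-weight sequence is the entrywise sum of those of A_1 and A_2 and its column-weight sequence is their concatenation. -/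
/-- The first nonzero entry of row `i` of `A` (or `0` if row `i` is zero). -/
def firstNZRow {m n : ℕ} (A : Matrix (Fin m) (Fin n) ℤ) (i : Fin m) : ℤ :=
  if h : (Finset.univ.filter (fun j => A i j ≠ 0)).Nonempty then
    A i ((Finset.univ.filter (fun j => A i j ≠ 0)).min' h)
  else 0

/-- The last nonzero entry of row `i` of `A` (or `0` if row `i` is zero). -/
def lastNZRow {m n : ℕ} (A : Matrix (Fin m) (Fin n) ℤ) (i : Fin m) : ℤ :=
  if h : (Finset.univ.filter (fun j => A i j ≠ 0)).Nonempty then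
    A i ((Finset.univ.filter (fun j => A i j ≠ 0)).max' h)
  else 0

/-- The first (topmost) nonzero entry of column `j` of `A` (or `0` if column `j` is zero). -/
def firstNZCol {m n : ℕ} (A : Matrix (Fin m) (Fin n) ℤ) (j : Fin n) : ℤ :=
  if h : (Finset.univ.filter (fun i => A i j ≠ 0)).Nonempty then
    A ((Finset.univ.filter (fun i => A i j ≠ 0)).min' h) j
  else 0

/-- The last (bottommost) nonzero entry of column `j` of `A` (or `0` if column `j` is zero). -/
def lastNZCol {m n : ℕ} (A : Matrix (Fin m) (Fin n) ℤ) (j : Fin n) : ℤ :=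
  if h : (Finset.univ.filter (fun i => A i j ≠ 0)).Nonempty then
    A ((Finset.univ.filter (fun i => A i j ≠ 0)).max' h) j
  else 0

/-!
Entries and columns of `[A1 A2]` are those of `A1` and `A2`, so only the alternation of the
rows can fail, and only across the junction. When both halves of a row are nonzero, the one
pair of consecutive nonzero entries straddling the junction is the last nonzero entry of the
`A1` part and the first nonzero entry of the `A2` part, so the row alternates exactly when
these two are opposite. The weights are additive because nonzero entries of `[A1 A2]` are
counted separately in the two blocks.
-/

open Finset

namespace Fin

variable {n1 n2 : ℕ}

@[simp]
theorem castAdd_lt_natAdd (a : Fin n1) (b : Fin n2) : castAdd n2 a < natAdd n1 b := by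
  simp only [lt_def, val_castAdd, val_natAdd]; omega

end Fin

section Sequences

variable {n n1 n2 : ℕ}

-- Same shape as `firstNZRow` / `lastNZRow`, so that `firstNZRow A i` is `firstNZ (A i)` by `rfl`.
def firstNZ (r : Fin n → ℤ) : ℤ :=
  if h : (univ.filter (fun j => r j ≠ 0)).Nonempty then
    r ((univ.filter (fun j => r j ≠ 0)).min' h)
  else 0

def lastNZ (r : Fin n → ℤ) : ℤ :=
  if h : (univ.filter (fun j => r j ≠ 0)).Nonempty then
    r ((univ.filter (fun j => r j ≠ 0)).max' h)
  else 0

theorem firstNZ_eq_of {r : Fin n → ℤ} {j : Fin n} (hj : r j ≠ 0) (h : ∀ l < j, r l = 0) :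
    firstNZ r = r j := by
  have hmem : j ∈ univ.filter (fun l => r l ≠ 0) := by simpa using hj
  have hmin : (univ.filter (fun l => r l ≠ 0)).min' ⟨j, hmem⟩ = j :=
    le_antisymm (min'_le _ j hmem) <| le_min' _ _ _ fun l hl =>
      not_lt.mp fun hlj => (mem_filter.mp hl).2 (h l hlj)
  rw [firstNZ, dif_pos ⟨j, hmem⟩, hmin]

theorem lastNZ_eq_of {r : Fin n → ℤ} {j : Fin n} (hj : r j ≠ 0)
    (h : ∀ l, j < l → r l = 0) : lastNZ r = r j := by
  have hmem : j ∈ univ.filter (fun l => r l ≠ 0) := by simpa using hj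
  have hmax : (univ.filter (fun l => r l ≠ 0)).max' ⟨j, hmem⟩ = j :=
    le_antisymm (max'_le _ _ _ fun l hl =>
      not_lt.mp fun hjl => (mem_filter.mp hl).2 (h l hjl)) (le_max' _ j hmem)
  rw [lastNZ, dif_pos ⟨j, hmem⟩, hmax]

theorem exists_first_ne_zero {r : Fin n → ℤ} (h : ∃ j, r j ≠ 0) :
    ∃ j, r j ≠ 0 ∧ ∀ l < j, r l = 0 := by
  obtain ⟨j, hj⟩ := h
  have hne : (univ.filter (fun l => r l ≠ 0)).Nonempty := ⟨j, by simpa using hj⟩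
  refine ⟨_, (mem_filter.mp (min'_mem _ hne)).2, fun l hl => ?_⟩
  by_contra hl0
  exact (min'_le _ l (by simpa using hl0)).not_gt hl

theorem exists_last_ne_zero {r : Fin n → ℤ} (h : ∃ j, r j ≠ 0) :
    ∃ j, r j ≠ 0 ∧ ∀ l, j < l → r l = 0 := by
  obtain ⟨j, hj⟩ := h
  have hne : (univ.filter (fun l => r l ≠ 0)).Nonempty := ⟨j, by simpa using hj⟩
  refine ⟨_, (mem_filter.mp (max'_mem _ hne)).2, fun l hl => ?_⟩
  by_contra hl0
  exact (le_max' _ l (by simpa using hl0)).not_gt hl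

theorem AltSigns.lastNZ_eq_neg_firstNZ {r1 : Fin n1 → ℤ} {r2 : Fin n2 → ℤ}
    (h : AltSigns (Fin.append r1 r2)) (h1 : ∃ j, r1 j ≠ 0) (h2 : ∃ j, r2 j ≠ 0) :
    lastNZ r1 = -firstNZ r2 := by
  obtain ⟨a, ha, ha_last⟩ := exists_last_ne_zero h1
  obtain ⟨b, hb, hb_first⟩ := exists_first_ne_zero h2
  have gap : ∀ l, Fin.castAdd n2 a < l → l < Fin.natAdd n1 b → Fin.append r1 r2 l = 0 := by
    intro l
    refine Fin.addCases (fun l hal _ => ?_) (fun l _ hlb => ?_) l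
    · simpa using ha_last l hal
    · simpa using hb_first l (by simpa using hlb)
  have := h _ _ (Fin.castAdd_lt_natAdd a b) (by simpa using ha) (by simpa using hb) gap
  simp only [Fin.append_left, Fin.append_right] at this
  rw [lastNZ_eq_of ha ha_last, firstNZ_eq_of hb hb_first, this, neg_neg]

theorem AltSigns.append {r1 : Fin n1 → ℤ} {r2 : Fin n2 → ℤ} (h1 : AltSigns r1)
    (h2 : AltSigns r2) (h : lastNZ r1 = -firstNZ r2) : AltSigns (Fin.append r1 r2) := by
  intro j j'
  refine Fin.addCases (fun a => ?_) (fun a => ?_) j <;>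
    refine Fin.addCases (fun b => ?_) (fun b => ?_) j' <;>
    simp only [Fin.append_left, Fin.append_right]
  · intro hab ha hb hgap
    refine h1 a b hab ha hb fun l hal hlb => ?_
    simpa using hgap (Fin.castAdd n2 l) hal hlb
  · intro _ ha hb hgap
    rw [← firstNZ_eq_of hb, ← lastNZ_eq_of ha, h, neg_neg]
    · intro l hal
      simpa using hgap (Fin.castAdd n2 l) hal (Fin.castAdd_lt_natAdd l b)
    · intro l hlb
      simpa using hgap (Fin.natAdd n1 l) (Fin.castAdd_lt_natAdd a l) (by simpa using hlb)
  · intro hab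
    exact absurd hab (Fin.castAdd_lt_natAdd b a).asymm
  · intro hab ha hb hgap
    refine h2 a b (by simpa using hab) ha hb fun l hal hlb => ?_
    simpa using hgap (Fin.natAdd n1 l) (by simpa using hal) (by simpa using hlb)

end Sequences

section Matrices

variable {m n1 n2 : ℕ}

open Matrix

theorem isNASM_append_iff {A1 : Matrix (Fin m) (Fin n1) ℤ} {A2 : Matrix (Fin m) (Fin n2) ℤ}
    (h1 : IsNASM A1) (h2 : IsNASM A2)
    (hr1 : ∀ i, ∃ j, A1 i j ≠ 0) (hr2 : ∀ i, ∃ j, A2 i j ≠ 0) :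
    IsNASM (of fun i => Fin.append (A1 i) (A2 i)) ↔ ∀ i, lastNZRow A1 i = -firstNZRow A2 i := by
  obtain ⟨hentries1, hrows1, hcols1⟩ := h1
  obtain ⟨hentries2, hrows2, hcols2⟩ := h2
  constructor
  · rintro ⟨-, hrows, -⟩ i
    exact (hrows i).lastNZ_eq_neg_firstNZ (hr1 i) (hr2 i)
  · intro h
    refine ⟨fun i j => ?_, fun i => (hrows1 i).append (hrows2 i) (h i), fun j => ?_⟩
    · refine Fin.addCases (fun j => ?_) (fun j => ?_) j
      · simpa using hentries1 i j
      · simpa using hentries2 i j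
    · refine Fin.addCases (fun j => ?_) (fun j => ?_) j
      · simpa using hcols1 j
      · simpa using hcols2 j

variable {α : Type*} [Zero α] [DecidableEq α]

theorem rowWeight_append (A1 : Matrix (Fin m) (Fin n1) α) (A2 : Matrix (Fin m) (Fin n2) α)
    (i : Fin m) :
    rowWeight (of fun i => Fin.append (A1 i) (A2 i)) i = rowWeight A1 i + rowWeight A2 i := by
  simp only [rowWeight, card_filter]
  rw [Fin.sum_univ_add]
  simp

@[simp]
theorem colWeight_append_castAdd (A1 : Matrix (Fin m) (Fin n1) α)
    (A2 : Matrix (Fin m) (Fin n2) α) (j : Fin n1) :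
    colWeight (of fun i => Fin.append (A1 i) (A2 i)) (Fin.castAdd n2 j) = colWeight A1 j := by
  simp [colWeight]

@[simp]
theorem colWeight_append_natAdd (A1 : Matrix (Fin m) (Fin n1) α)
    (A2 : Matrix (Fin m) (Fin n2) α) (j : Fin n2) :
    colWeight (of fun i => Fin.append (A1 i) (A2 i)) (Fin.natAdd n1 j) = colWeight A2 j := by
  simp [colWeight]

end Matrices

/-- Let `A1` be an `m × n1` NASM and `A2` an `m × n2` NASM, each of
whose rows contains a nonzero entry. The horizontal concatenation `B = [A1 A2]` is a
NASM iff `A1^→ = -A2^←`, and in that case its row-weight sequence is the entrywise sum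
of those of `A1`, `A2` and its column-weight sequence is their concatenation. -/
theorem statement3 (m n1 n2 : ℕ)
    (A1 : Matrix (Fin m) (Fin n1) ℤ) (A2 : Matrix (Fin m) (Fin n2) ℤ)
    (h1 : IsNASM A1) (h2 : IsNASM A2)
    (hr1 : ∀ i, ∃ j, A1 i j ≠ 0) (hr2 : ∀ i, ∃ j, A2 i j ≠ 0)
    (B : Matrix (Fin m) (Fin (n1 + n2)) ℤ)
    (hB : ∀ i j, B i j = Fin.append (A1 i) (A2 i) j) :
    (IsNASM B ↔ ∀ i, lastNZRow A1 i = -(firstNZRow A2 i)) ∧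
    ((∀ i, lastNZRow A1 i = -(firstNZRow A2 i)) →
      (∀ i, rowWeight B i = rowWeight A1 i + rowWeight A2 i) ∧
      (∀ j : Fin (n1 + n2),
        colWeight B j = Fin.append (fun j1 => colWeight A1 j1) (fun j2 => colWeight A2 j2) j)) := by
  obtain rfl : B = Matrix.of fun i => Fin.append (A1 i) (A2 i) := by ext i j; exact hB i j
  refine ⟨isNASM_append_iff h1 h2 hr1 hr2, fun _ => ⟨rowWeight_append A1 A2, fun j => ?_⟩⟩
  refine Fin.addCases (fun j => ?_) (fun j => ?_) j <;> simp
end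

section
/- Let a_1 < a_2 < ⋯ < a_n be positive integers and let v be an integer with v > a_n. Then every run of the alternated form of (a_1,…,a_n) is nonzero modulo v; that is, for all indices 1 ≤ i ≤ j ≤ n, the sum Σ_{ℓ=i}^{j} (-1)^ℓ a_ℓ is not congruent to 0 modulo v (and hence the same holds for the negated alternated form). -/
/-!
Multiplying the run `∑_{l=i}^{j} (-1)^(l+1) a_l` by the sign `(-1)^(j+1)` of its last term gives
`T_j = a_j - a_{j-1} + a_{j-2} - ⋯`, which satisfies `T_i = a_i` and `T_{j+1} = a_{j+1} - T_j`.
For a positive strictly increasing sequence this recursion keeps `T_j` in `(0, a_j]`, so `T_j` is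
strictly between `0` and `v`, and neither the run nor its negative can be divisible by `v`.
-/

open Finset

section AlternatingRun

variable {R : Type*} [CommRing R]

lemma neg_one_pow_mul_alternating_sum_Icc_succ_top (b : ℕ → R) {i j : ℕ} (hij : i ≤ j + 1) :
    (-1) ^ (j + 1 + 1) * ∑ l ∈ Icc i (j + 1), (-1) ^ (l + 1) * b l =
      b (j + 1) - (-1) ^ (j + 1) * ∑ l ∈ Icc i j, (-1) ^ (l + 1) * b l := by
  have hsq : ((-1 : R) ^ (j + 1)) ^ 2 = 1 := by
    rw [← pow_mul, mul_comm, pow_mul, neg_one_sq, one_pow]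
  rw [sum_Icc_succ_top hij, pow_succ _ (j + 1)]
  linear_combination b (j + 1) * hsq

variable [LinearOrder R] [IsStrictOrderedRing R]

lemma neg_one_pow_mul_alternating_sum_Icc_mem_Ioc {b : ℕ → R} {i : ℕ} (hi : 0 < b i) :
    ∀ j, i ≤ j → StrictMonoOn b (Set.Icc i j) →
      (-1) ^ (j + 1) * ∑ l ∈ Icc i j, (-1) ^ (l + 1) * b l ∈ Set.Ioc 0 (b j) := by
  refine Nat.le_induction ?_ fun j hij ih hmono => ?_
  · intro _
    simp only [Icc_self, sum_singleton, ← mul_assoc, ← pow_add, ← two_mul, pow_mul]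
    simpa using hi
  · obtain ⟨hpos, hle⟩ := ih (hmono.mono (Set.Icc_subset_Icc_right j.le_succ))
    have hstep : b j < b (j + 1) :=
      hmono ⟨hij, j.le_succ⟩ ⟨hij.trans j.le_succ, le_rfl⟩ j.lt_succ_self
    rw [neg_one_pow_mul_alternating_sum_Icc_succ_top b (hij.trans j.le_succ)]
    constructor <;> linarith

end AlternatingRun

/-- Let `a 0 < a 1 < ⋯` be (positive) strictly increasing integers all
less than `v` (i.e. `v` exceeds the last term). Then every run of the alternated form
`(-a_1, a_2, -a_3, …)` is nonzero modulo `v`, and the same holds for the negated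
alternated form. Here `a l` plays the role of `a_{l+1}`, so the sign of `a l` in the
alternated form is `(-1) ^ ((l : ℕ) + 1)`. -/
theorem statement5 (n : ℕ) (a : Fin n → ℤ) (hpos : ∀ l, 0 < a l)
    (hmono : StrictMono a) (v : ℤ) (hv : ∀ l, a l < v) :
    ∀ i j : Fin n, i ≤ j →
      (¬ v ∣ ∑ l ∈ Finset.Icc i j, (-1 : ℤ) ^ ((l : ℕ) + 1) * a l) ∧
      (¬ v ∣ ∑ l ∈ Finset.Icc i j, -((-1 : ℤ) ^ ((l : ℕ) + 1) * a l)) := by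
  intro i j hij
  let b : ℕ → ℤ := fun l => if h : l < n then a ⟨l, h⟩ else 0
  have hb (l : Fin n) : b l = a l := dif_pos l.isLt
  have hrun : ∑ l ∈ Icc i j, (-1 : ℤ) ^ ((l : ℕ) + 1) * a l =
      ∑ l ∈ Icc (i : ℕ) j, (-1) ^ (l + 1) * b l := by
    rw [← Fin.map_valEmbedding_Icc, sum_map]
    exact sum_congr rfl fun l _ => by rw [Fin.valEmbedding_apply, hb]
  have hmono' : StrictMonoOn b (Set.Icc (i : ℕ) j) := fun l hl m hm hlm => by
    have hl' : l < n := hl.2.trans_lt j.isLt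
    have hm' : m < n := hm.2.trans_lt j.isLt
    simpa [b, hl', hm'] using hmono (show (⟨l, hl'⟩ : Fin n) < ⟨m, hm'⟩ from hlm)
  obtain ⟨hT_pos, hT_le⟩ := neg_one_pow_mul_alternating_sum_Icc_mem_Ioc
    (by rw [hb]; exact hpos i) j hij hmono'
  rw [hb, ← hrun] at hT_le
  rw [← hrun] at hT_pos
  have hrun_ndvd : ¬ v ∣ ∑ l ∈ Icc i j, (-1 : ℤ) ^ ((l : ℕ) + 1) * a l := fun hdvd =>
    hT_pos.ne' (Int.eq_zero_of_dvd_of_nonneg_of_lt hT_pos.le (hT_le.trans_lt (hv j))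
      (hdvd.mul_left _))
  exact ⟨hrun_ndvd, by rwa [sum_neg_distrib, dvd_neg]⟩
end

section
/- Let n ≥ 2 and let a_1,…,a_n be pairwise distinct positive integers with a_1 < a_2 < ⋯ < a_{n-1}, and let v be an integer with v > a_{n-1} and v > a_n. If Σ_{ℓ=1}^{n} (-1)^ℓ a_ℓ ≡ 0 (mod v), then every proper run of the alternated form is nonzero modulo v; that is, for all 1 ≤ i ≤ j ≤ n with (i,j) ≠ (1,n), the sum Σ_{ℓ=i}^{j} (-1)^ℓ a_ℓ is not congruent to 0 modulo v. -/
/-! On a strictly increasing stretch `a i < ⋯ < a j` of positive integers the alternating run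
`a j - a (j-1) + a (j-2) - ⋯` lies in `(0, a j]`, so it is nonzero modulo any `v > a j`.
This settles the runs ending before `n`. A proper run ending at `n` starts at some `i ≥ 2`,
and it differs from the full alternating sum, which vanishes modulo `v`, by the run over
`[1, i - 1]`; that run ends before `n`. -/

open Finset

/-- The run `s_{i,j}` of the alternated form `(-a 1, a 2, -a 3, …)`. -/
def altRun (a : ℕ → ℤ) (i j : ℕ) : ℤ :=
  ∑ l ∈ Icc i j, (-1 : ℤ) ^ l * a l

lemma altRun_add_altRun {a : ℕ → ℤ} {i k j : ℕ} (hik : i ≤ k + 1) (hkj : k ≤ j) :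
    altRun a i k + altRun a (k + 1) j = altRun a i j := by
  simp only [altRun, ← Ico_add_one_right_eq_Icc]
  exact sum_Ico_consecutive _ hik (by omega)

lemma altRun_succ {a : ℕ → ℤ} {i j : ℕ} (hij : i ≤ j + 1) :
    altRun a i (j + 1) = altRun a i j + (-1) ^ (j + 1) * a (j + 1) :=
  sum_Icc_succ_top hij _

lemma altRun_mem_Ioc_of_strictMonoOn {a : ℕ → ℤ} {i j : ℕ} (hij : i ≤ j) (hpos : 0 < a i)
    (hmono : StrictMonoOn a (Set.Icc i j)) :
    0 < (-1) ^ j * altRun a i j ∧ (-1) ^ j * altRun a i j ≤ a j := by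
  induction j, hij using Nat.le_induction with
  | base =>
    simp only [altRun, Icc_self, sum_singleton, ← mul_assoc, ← pow_add, Even.neg_one_pow ⟨i, rfl⟩,
      one_mul]
    exact ⟨hpos, le_rfl⟩
  | succ j hij ih =>
    obtain ⟨hlow, hhigh⟩ := ih (hmono.mono (Set.Icc_subset_Icc_right j.le_succ))
    have hstep : a j < a (j + 1) :=
      hmono ⟨hij, j.le_succ⟩ ⟨hij.trans j.le_succ, le_rfl⟩ j.lt_succ_self
    have hflip : (-1) ^ (j + 1) * altRun a i (j + 1) = a (j + 1) - (-1) ^ j * altRun a i j := by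
      have hsq : ((-1 : ℤ) ^ j) ^ 2 = 1 := by rw [← pow_mul, Even.neg_one_pow ⟨j, by ring⟩]
      rw [altRun_succ (hij.trans j.le_succ), pow_succ]
      linear_combination a (j + 1) * hsq
    rw [hflip]
    constructor <;> linarith

lemma not_dvd_altRun_of_strictMonoOn {a : ℕ → ℤ} {i j : ℕ} {v : ℤ} (hij : i ≤ j)
    (hpos : 0 < a i) (hmono : StrictMonoOn a (Set.Icc i j)) (hv : a j < v) :
    ¬ v ∣ altRun a i j := fun hdvd => by
  obtain ⟨hlow, hhigh⟩ := altRun_mem_Ioc_of_strictMonoOn hij hpos hmono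
  have := Int.le_of_dvd hlow (hdvd.mul_left _)
  linarith

theorem statement7_general (n : ℕ) (a : ℕ → ℤ)
    (hpos : ∀ l, 1 ≤ l → l ≤ n → 0 < a l)
    (hmono : ∀ l, 1 ≤ l → l + 1 ≤ n - 1 → a l < a (l + 1))
    (v : ℤ) (hv1 : a (n - 1) < v)
    (hzero : v ∣ ∑ l ∈ Finset.Icc 1 n, (-1 : ℤ) ^ l * a l) :
    ∀ i j : ℕ, 1 ≤ i → i ≤ j → j ≤ n → ¬(i = 1 ∧ j = n) →
      ¬ v ∣ ∑ l ∈ Finset.Icc i j, (-1 : ℤ) ^ l * a l := by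
  have hstrict : StrictMonoOn a (Set.Icc 1 (n - 1)) :=
    strictMonoOn_of_lt_add_one Set.ordConnected_Icc fun l _ hl hl' => hmono l hl.1 hl'.2
  have hearly : ∀ i j, 1 ≤ i → i ≤ j → j ≤ n - 1 → ¬ v ∣ altRun a i j := fun i j hi hij hjn =>
    not_dvd_altRun_of_strictMonoOn hij (hpos i hi (by omega))
      (hstrict.mono (Set.Icc_subset_Icc hi hjn))
      ((hstrict.monotoneOn ⟨hi.trans hij, hjn⟩ ⟨hi.trans (hij.trans hjn), le_rfl⟩ hjn).trans_lt hv1)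
  intro i j hi hij hjn hproper hdvd
  rcases hjn.lt_or_eq with hjn | rfl
  · exact hearly i j hi hij (by omega) hdvd
  · have hsplit : altRun a 1 (i - 1) + altRun a i j = altRun a 1 j := by
      simpa only [Nat.sub_add_cancel hi] using altRun_add_altRun (a := a) (k := i - 1) (by omega)
        (by omega)
    refine hearly 1 (i - 1) le_rfl (by omega) (by omega) ?_
    rw [← add_sub_cancel_right (altRun a 1 (i - 1)) (altRun a i j), hsplit]
    exact dvd_sub hzero hdvd

/-- Let `n ≥ 2`, let `a 1, …, a n` be pairwise distinct positive
integers with `a 1 < a 2 < ⋯ < a (n-1)`, and let `v > a (n-1)`, `v > a n`. If the total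
alternating sum `∑_{ℓ=1}^{n} (-1)^ℓ a ℓ` is `0` modulo `v`, then every proper run of the
alternated form is nonzero modulo `v`. -/
theorem statement7 (n : ℕ) (hn : 2 ≤ n) (a : ℕ → ℤ)
    (hpos : ∀ l, 1 ≤ l → l ≤ n → 0 < a l)
    (hdist : ∀ l l', 1 ≤ l → l ≤ n → 1 ≤ l' → l' ≤ n → l ≠ l' → a l ≠ a l')
    (hmono : ∀ l, 1 ≤ l → l + 1 ≤ n - 1 → a l < a (l + 1))
    (v : ℤ) (hv1 : a (n - 1) < v) (hv2 : a n < v)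
    (hzero : v ∣ ∑ l ∈ Finset.Icc 1 n, (-1 : ℤ) ^ l * a l) :
    ∀ i j : ℕ, 1 ≤ i → i ≤ j → j ≤ n → ¬(i = 1 ∧ j = n) →
      ¬ v ∣ ∑ l ∈ Finset.Icc i j, (-1 : ℤ) ^ l * a l :=
  statement7_general n a hpos hmono v hv1 hzero
end

section
/- Let 𝐡=(h_1,…,h_m) and 𝐤=(k_1,…,k_n) be sequences of positive integers and assume there exists a NASM(m,n;𝐡,𝐤). Let v ≥ 2 be an integer and let S be a subset of Z_v \ {0} such that s ≠ -t for all distinct s,t ∈ S and s ≠ -s for every s ∈ S. Then there exists a GHA_S(m,n;𝐡,𝐤) over Z_v that is nonzero sum and naturally simple (i.e., every reduced row and every reduced column of it is a simple sequence with nonzero total sum) if and only if |S| = h_1+⋯+h_m = k_1+⋯+k_n. -/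
/-- The reduced `i`-th row of `H`: the list of nonzero entries of row `i`,
read from left to right. -/
def redRow {α : Type*} [Zero α] [DecidableEq α] {m n : ℕ}
    (H : Matrix (Fin m) (Fin n) α) (i : Fin m) : List α :=
  ((List.finRange n).map (fun j => H i j)).filter (fun x => decide (x ≠ 0))

/-- The reduced `j`-th column of `H`: the list of nonzero entries of column `j`,
read from top to bottom. -/
def redCol {α : Type*} [Zero α] [DecidableEq α] {m n : ℕ}
    (H : Matrix (Fin m) (Fin n) α) (j : Fin n) : List α :=
  ((List.finRange m).map (fun i => H i j)).filter (fun x => decide (x ≠ 0))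

/-- A finite sequence is simple if its partial sums are pairwise distinct and
nonzero, except possibly for the total sum, which may be zero. -/
def IsSimpleList {α : Type*} [AddMonoid α] (l : List α) : Prop :=
  ∀ p q : ℕ, p < q → q ≤ l.length → ¬(p = 0 ∧ q = l.length) →
    (l.take p).sum ≠ (l.take q).sum

/-- A generalized Heffter array `GHA_S(m, n; hw, kw)` over an abelian group:
row `i` has exactly `hw i` nonzero entries, column `j` has exactly `kw j` nonzero
entries, every nonzero entry lies in `S ∪ -S`, and for every `s ∈ S` exactly one
entry lies in `{s, -s}`. -/
def IsGHA {α : Type*} [AddCommGroup α] [DecidableEq α] {m n : ℕ}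
    (S : Finset α) (hw : Fin m → ℕ) (kw : Fin n → ℕ)
    (H : Matrix (Fin m) (Fin n) α) : Prop :=
  (∀ i, rowWeight H i = hw i) ∧
  (∀ j, colWeight H j = kw j) ∧
  (∀ i j, H i j ≠ 0 → (H i j ∈ S ∨ -(H i j) ∈ S)) ∧
  (∀ s ∈ S, (Finset.univ.filter
      (fun p : Fin m × Fin n => H p.1 p.2 = s ∨ H p.1 p.2 = -s)).card = 1)

/-- `H` is nonzero sum and naturally simple: every reduced row and every reduced
column is a simple sequence with nonzero total sum. -/
def NonzeroSumSimpleNat {α : Type*} [AddCommGroup α] [DecidableEq α] {m n : ℕ}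
    (H : Matrix (Fin m) (Fin n) α) : Prop :=
  (∀ i, IsSimpleList (redRow H i) ∧ (redRow H i).sum ≠ 0) ∧
  (∀ j, IsSimpleList (redCol H j) ∧ (redCol H j).sum ≠ 0)

/-- `H` is zero sum (every reduced row and column sums to zero) and simple (the
nonzero entries of every row and of every column admit an ordering which is a
simple sequence). -/
def ZeroSumSimple {α : Type*} [AddCommGroup α] [DecidableEq α] {m n : ℕ}
    (H : Matrix (Fin m) (Fin n) α) : Prop :=
  (∀ i, (redRow H i).sum = 0) ∧
  (∀ j, (redCol H j).sum = 0) ∧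
  (∀ i, ∃ l : List α, l.Perm (redRow H i) ∧ IsSimpleList l) ∧
  (∀ j, ∃ l : List α, l.Perm (redCol H j) ∧ IsSimpleList l)

/-!
Necessity is counting: `x ↦ ±x` maps the nonzero cells of a GHA bijectively onto `S`, and the
row weights and the column weights both add up to the number of nonzero cells.

Sufficiency: list the nonzero cells of the NASM `A` along a linear extension of the product order
and give them, in that order, the elements of `S` sorted by `|s.valMinAbs|`; the entry at cell
`(i, j)` is then `A i j * |s.valMinAbs|`. Along every row and every column the nonzero entries,
read as integers, alternate in sign with strictly increasing absolute values below `v / 2`. For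
such a sequence every new partial sum leaves the interval spanned by the previous two, which
contains all earlier partial sums. Hence the partial sums `0 = s₀, s₁, …, s_N` are distinct
integers with `|s_k| ≤ |a_k| < v / 2`, and they stay distinct modulo `v`.
-/

open Finset

theorem ZMod.intCast_injOn_of_two_mul_abs_lt (v : ℕ) [NeZero v] :
    Set.InjOn (Int.cast : ℤ → ZMod v) {x | 2 * |x| < v} := by
  have hval : ∀ z : ℤ, 2 * |z| < v → (z : ZMod v).valMinAbs = z := fun z hz =>
    (ZMod.valMinAbs_spec _ _).2 ⟨rfl, by
      rcases abs_cases z with ⟨h, h'⟩ | ⟨h, h'⟩ <;> constructor <;> omega⟩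
  intro x hx y hy hxy
  rw [← hval x hx, ← hval y hy, hxy]

theorem ZMod.intCast_ne_zero_of_two_mul_abs_lt {v : ℕ} [NeZero v] {x : ℤ} (hx : 2 * |x| < v)
    (h : x ≠ 0) : (x : ZMod v) ≠ 0 := fun h0 =>
  h (ZMod.intCast_injOn_of_two_mul_abs_lt v hx (by simpa using NeZero.pos v) (by simpa using h0))

theorem ZMod.two_mul_abs_valMinAbs_lt {v : ℕ} [NeZero v] {s : ZMod v} (hs : s ≠ -s) :
    2 * |s.valMinAbs| < v := by
  obtain ⟨hlo, hhi⟩ := s.valMinAbs_mem_Ioc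
  have hne : s.valMinAbs * 2 ≠ v := fun h =>
    hs ((ZMod.neg_eq_self_iff s).mpr (.inr (s.valMinAbs_mul_two_eq_iff.mp h))).symm
  rcases abs_cases s.valMinAbs with ⟨h, -⟩ | ⟨h, -⟩ <;> rw [h] <;> omega

theorem ZMod.intCast_abs_valMinAbs_eq_or_eq_neg {v : ℕ} (s : ZMod v) :
    ((|s.valMinAbs| : ℤ) : ZMod v) = s ∨ ((|s.valMinAbs| : ℤ) : ZMod v) = -s := by
  rcases abs_choice s.valMinAbs with h | h <;> rw [h] <;> simp [ZMod.coe_valMinAbs]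

theorem two_mul_abs_sign_mul_lt {a r : ℤ} {v : ℕ} (ha : a = 1 ∨ a = -1) (hr : 0 < r)
    (hrv : 2 * r < v) : 2 * |a * r| < v := by
  rcases ha with rfl | rfl <;> simpa [abs_of_pos hr] using hrv

theorem mul_ne_zero_iff_of_imp_pos {a r : ℤ} (hr : a ≠ 0 → 0 < r) : a * r ≠ 0 ↔ a ≠ 0 :=
  ⟨left_ne_zero_of_mul, fun h => mul_ne_zero h (hr h).ne'⟩

theorem isSimpleList_of_injOn {α : Type*} [AddMonoid α] {l : List α}
    (h : Set.InjOn (fun k => (l.take k).sum) (Set.Iic l.length)) : IsSimpleList l :=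
  fun _ _ hpq hq _ he => hpq.ne (h (Set.mem_Iic.mpr (hpq.le.trans hq)) hq he)

theorem List.sum_ne_zero_of_injOn {α : Type*} [AddMonoid α] {l : List α} (hl : l ≠ [])
    (h : Set.InjOn (fun k => (l.take k).sum) (Set.Iic l.length)) : l.sum ≠ 0 := by
  intro hsum
  have := h (Set.mem_Iic.mpr le_rfl) (Set.mem_Iic.mpr (Nat.zero_le _)) (by simpa using hsum)
  exact hl (List.length_eq_zero_iff.mp this)

theorem add_add_notMem_uIcc_and_mem_uIcc {x a b : ℤ} (hab : a * b < 0) (hlt : |a| < |b|) :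
    x + a + b ∉ Set.uIcc x (x + a) ∧ x ∈ Set.uIcc (x + a) (x + a + b) := by
  simp only [Set.mem_uIcc]
  rcases mul_neg_iff.mp hab with ⟨ha, hb⟩ | ⟨ha, hb⟩
  · rw [abs_of_pos ha, abs_of_neg hb] at hlt
    constructor <;> omega
  · rw [abs_of_neg ha, abs_of_pos hb] at hlt
    constructor <;> omega

theorem abs_le_abs_sub_of_zero_mem_uIcc {x y : ℤ} (h : 0 ∈ Set.uIcc x y) : |y| ≤ |y - x| := by
  rcases Set.mem_uIcc.mp h with ⟨hx, hy⟩ | ⟨hx, hy⟩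
  · rw [abs_of_nonneg hy, abs_of_nonneg (by omega)]; omega
  · rw [abs_of_nonpos hx, abs_of_nonpos (by omega)]; omega

def IsZigzag (l : List ℤ) : Prop :=
  l.IsChain fun a b => a * b < 0 ∧ |a| < |b|

namespace IsZigzag

variable {l : List ℤ}

theorem sum_take_mem_uIcc_and_injOn (hl : IsZigzag l) (h0 : ∀ a ∈ l.head?, a ≠ 0) {k : ℕ}
    (hk : k ≤ l.length) :
    (∀ j ≤ k, (l.take j).sum ∈ Set.uIcc (l.take (k - 1)).sum (l.take k).sum) ∧
      Set.InjOn (fun j => (l.take j).sum) (Set.Iic k) := by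
  induction k with
  | zero => exact ⟨by simp, fun i hi j hj _ => by simp_all⟩
  | succ k ih =>
    obtain ⟨hmem, hinj⟩ := ih (by omega)
    have hz : (l.take (k + 1)).sum = (l.take k).sum + l[k] := List.sum_take_succ l k (by omega)
    have hstep : (l.take (k + 1)).sum ∉ Set.uIcc (l.take (k - 1)).sum (l.take k).sum ∧
        (l.take (k - 1)).sum ∈ Set.uIcc (l.take k).sum (l.take (k + 1)).sum := by
      rcases k with _ | k
      · have : l[0] ≠ 0 := h0 _ (by simp [List.head?_eq_getElem?])
        simpa [hz] using this
      · have hy : (l.take (k + 1)).sum = (l.take k).sum + l[k] := List.sum_take_succ l k (by omega)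
        obtain ⟨hsign, habs⟩ := List.isChain_iff_getElem.mp hl k (by omega)
        rw [hz, hy]
        exact add_add_notMem_uIcc_and_mem_uIcc hsign habs
    refine ⟨fun j hj => ?_, ?_⟩
    · rw [Nat.add_sub_cancel]
      rcases Nat.lt_or_ge j (k + 1) with hj' | hj'
      · exact Set.uIcc_subset_uIcc hstep.2 Set.left_mem_uIcc (hmem j (by omega))
      · rw [show j = k + 1 by omega]; exact Set.right_mem_uIcc
    · rw [← Order.succ_eq_add_one, Order.Iic_succ, Set.injOn_insert (by simp)]
      refine ⟨hinj, fun ⟨j, hj, hjk⟩ => hstep.1 ?_⟩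
      have hjk : (l.take j).sum = (l.take (k + 1)).sum := hjk
      exact hjk ▸ hmem j hj

theorem injOn_sum_take_map_intCast {v : ℕ} [NeZero v] (hl : IsZigzag l)
    (h0 : ∀ a ∈ l, a ≠ 0) (hv : ∀ a ∈ l, 2 * |a| < v) :
    Set.InjOn (fun k => ((l.map (Int.cast : ℤ → ZMod v)).take k).sum)
      (Set.Iic (l.map (Int.cast : ℤ → ZMod v)).length) := by
  have hhead : ∀ a ∈ l.head?, a ≠ 0 := fun a ha => h0 a (List.mem_of_mem_head? ha)
  have hsmall : Set.MapsTo (fun k => (l.take k).sum) (Set.Iic l.length) {x | 2 * |x| < v} := by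
    rintro (_ | k) hk
    · simpa using NeZero.pos v
    · have hk : k < l.length := by simp only [Set.mem_Iic] at hk; omega
      have hzero := (hl.sum_take_mem_uIcc_and_injOn hhead hk).1 0 (Nat.zero_le _)
      have hle := abs_le_abs_sub_of_zero_mem_uIcc (by simpa using hzero)
      rw [List.sum_take_succ l k hk, add_sub_cancel_left] at hle
      have hlt := hv _ (List.getElem_mem hk)
      show 2 * |(l.take (k + 1)).sum| < (v : ℤ)
      rw [List.sum_take_succ l k hk]
      omega
  simp only [← List.map_take, ← Int.cast_list_sum, List.length_map]
  exact (ZMod.intCast_injOn_of_two_mul_abs_lt v).comp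
    (hl.sum_take_mem_uIcc_and_injOn hhead le_rfl).2 hsmall

end IsZigzag

theorem List.isChain_filter_of_pairwise_lt {ι : Type*} [Preorder ι] {R : ι → ι → Prop}
    {p : ι → Bool} {l : List ι} (hl : l.Pairwise (· < ·))
    (h : ∀ i j, i < j → p i → p j → (∀ t ∈ l, i < t → t < j → ¬ p t) → R i j) :
    (l.filter p).IsChain R := by
  refine List.isChain_iff_forall_rel_of_append_cons_cons.mpr fun i j l₁ l₂ hsplit => ?_
  have hmem : ∀ t, t ∈ l₁ ++ i :: j :: l₂ ↔ t ∈ l ∧ p t := by simp [← hsplit]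
  have hpw := hsplit ▸ hl.filter p
  simp only [List.pairwise_append, List.pairwise_cons, List.mem_cons] at hpw
  obtain ⟨-, ⟨hi, hj, -⟩, hl₁⟩ := hpw
  refine h i j (hi j (by simp)) ((hmem i).mp (by simp)).2 ((hmem j).mp (by simp)).2
    fun t ht hit htj hpt => ?_
  rcases List.mem_append.mp ((hmem t).mpr ⟨ht, hpt⟩) with h₁ | h₂
  · exact lt_asymm hit (hl₁ t h₁ i (by simp))
  · simp only [List.mem_cons] at h₂
    rcases h₂ with rfl | rfl | h₂
    · exact lt_irrefl _ hit
    · exact lt_irrefl _ htj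
    · exact lt_asymm htj (hj t h₂)

/-- The common shape of `redRow H i` and `redCol H j`. -/
def reducedSeq {α : Type*} [Zero α] [DecidableEq α] {N : ℕ} (g : Fin N → α) : List α :=
  ((List.finRange N).map g).filter fun x => decide (x ≠ 0)

theorem reducedSeq_comp {α β : Type*} [Zero α] [DecidableEq α] [Zero β] [DecidableEq β]
    {N : ℕ} (f : α → β) (g : Fin N → α) (hf : ∀ k, f (g k) = 0 ↔ g k = 0) :
    reducedSeq (f ∘ g) = (reducedSeq g).map f := by
  simp only [reducedSeq, List.filter_map, List.map_map]
  congr 1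
  exact List.filter_congr fun k _ => by simp [hf k]

section SignedMagnitudes

variable {N : ℕ} {a r : Fin N → ℤ}

theorem isZigzag_reducedSeq (ha : AltSigns a) (ha1 : ∀ k, a k = 0 ∨ a k = 1 ∨ a k = -1)
    (hr : StrictMonoOn r {k | a k ≠ 0}) (hr0 : ∀ k, a k ≠ 0 → 0 < r k) :
    IsZigzag (reducedSeq fun k => a k * r k) := by
  rw [IsZigzag, reducedSeq, List.filter_map, List.isChain_map]
  refine List.isChain_filter_of_pairwise_lt (List.pairwise_lt_finRange N)
    fun k k' hkk' hk hk' hgap => ?_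
  simp only [Function.comp_apply, decide_eq_true_eq, mul_ne_zero_iff_of_imp_pos (hr0 _)]
    at hk hk' hgap
  have halt : a k' = -a k := ha k k' hkk' hk hk' fun t hkt htk' =>
    not_not.mp (hgap t (List.mem_finRange t) hkt htk')
  have hlt := hr hk hk' hkk'
  have hpos := hr0 k hk
  rw [halt]
  rcases ha1 k with h | h | h
  · exact absurd h hk
  · rw [h, abs_of_pos (by linarith), abs_of_neg (by linarith)]; constructor <;> nlinarith
  · rw [h, abs_of_neg (by linarith), abs_of_pos (by linarith)]; constructor <;> nlinarith

theorem isSimpleList_reducedSeq_intCast {v : ℕ} [NeZero v] (ha : AltSigns a)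
    (ha1 : ∀ k, a k = 0 ∨ a k = 1 ∨ a k = -1) (hr : StrictMonoOn r {k | a k ≠ 0})
    (hr0 : ∀ k, a k ≠ 0 → 0 < r k) (hrv : ∀ k, a k ≠ 0 → 2 * r k < v)
    (hne : ∃ k, a k ≠ 0) :
    IsSimpleList (reducedSeq fun k => ((a k * r k : ℤ) : ZMod v)) ∧
      (reducedSeq fun k => ((a k * r k : ℤ) : ZMod v)).sum ≠ 0 := by
  have hsmall : ∀ k, a k ≠ 0 → 2 * |a k * r k| < v := fun k hk =>
    two_mul_abs_sign_mul_lt ((ha1 k).resolve_left hk) (hr0 k hk) (hrv k hk)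
  have hcast : ∀ k, ((a k * r k : ℤ) : ZMod v) = 0 ↔ a k * r k = 0 := fun k => by
    by_cases hk : a k = 0
    · simp [hk]
    · exact ⟨not_imp_not.mp (ZMod.intCast_ne_zero_of_two_mul_abs_lt (hsmall k hk)),
        fun h => by simp [h]⟩
  have hmem : ∀ x ∈ reducedSeq fun k => a k * r k, x ≠ 0 ∧ 2 * |x| < v := by
    intro x hx
    obtain ⟨hx, hx0⟩ := List.mem_filter.mp hx
    obtain ⟨k, -, rfl⟩ := List.mem_map.mp hx
    simp only [decide_eq_true_eq] at hx0
    exact ⟨hx0, hsmall k ((mul_ne_zero_iff_of_imp_pos (hr0 k)).mp hx0)⟩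
  have hinj := (isZigzag_reducedSeq ha ha1 hr hr0).injOn_sum_take_map_intCast (v := v)
    (fun x hx => (hmem x hx).1) (fun x hx => (hmem x hx).2)
  rw [show (fun k => ((a k * r k : ℤ) : ZMod v)) = Int.cast ∘ fun k => a k * r k from rfl,
    reducedSeq_comp _ _ hcast]
  refine ⟨isSimpleList_of_injOn hinj, List.sum_ne_zero_of_injOn ?_ hinj⟩
  obtain ⟨k, hk⟩ := hne
  exact List.ne_nil_of_mem (List.mem_map_of_mem (List.mem_filter.mpr
    ⟨List.mem_map_of_mem (List.mem_finRange k),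
      by simpa using (mul_ne_zero_iff_of_imp_pos (hr0 k)).mpr hk⟩))

end SignedMagnitudes

theorem Finset.exists_bijOn_strictMonoOn {ι γ : Type*} [PartialOrder ι] [LinearOrder γ]
    [Nonempty γ] {T : Finset ι} {R : Finset γ} (hcard : T.card = R.card) :
    ∃ g : ι → γ, Set.BijOn g T R ∧ StrictMonoOn g T := by
  classical
  let T' : Finset (LinearExtension ι) := T
  let e : T' ≃o R := (T'.orderIsoOfFin rfl).symm.trans (R.orderIsoOfFin hcard.symm)
  let g : ι → γ := fun i => if h : i ∈ T then e ⟨i, h⟩ else Classical.arbitrary γ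
  have hg : ∀ i (h : i ∈ T), g i = e ⟨i, h⟩ := fun i h => dif_pos h
  refine ⟨g, ⟨fun i hi => hg i hi ▸ (e ⟨i, hi⟩).2, fun i hi j hj hij => ?_,
    fun c hc => ?_⟩, fun i hi j hj hij => ?_⟩
  · rw [hg i hi, hg j hj] at hij
    exact congrArg Subtype.val (e.injective (Subtype.ext hij))
  · let i : ι := (e.symm ⟨c, hc⟩).1
    have hi : i ∈ T := (e.symm ⟨c, hc⟩).2
    refine ⟨i, hi, ?_⟩
    rw [hg i hi]
    exact congrArg Subtype.val (e.apply_symm_apply ⟨c, hc⟩)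
  · have hlt : (⟨i, hi⟩ : T') < ⟨j, hj⟩ :=
      lt_of_le_of_ne (toLinearExtension.monotone hij.le) fun h => hij.ne (congrArg Subtype.val h)
    rw [hg i hi, hg j hj]
    exact e.strictMono hlt

theorem Finset.exists_bijOn_strictMonoOn_comp {ι β γ : Type*} [PartialOrder ι] [LinearOrder γ]
    [Nonempty β] {T : Finset ι} {S : Finset β} {f : β → γ} (hf : Set.InjOn f S)
    (hcard : T.card = S.card) :
    ∃ ψ : ι → β, Set.BijOn ψ T S ∧ StrictMonoOn (f ∘ ψ) T := by
  classical
  have : Nonempty γ := ⟨f (Classical.arbitrary β)⟩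
  obtain ⟨g, hgbij, hgmono⟩ := Finset.exists_bijOn_strictMonoOn
    (T := T) (R := S.image f) (by rw [card_image_of_injOn hf, hcard])
  rw [coe_image] at hgbij
  have hinv := hf.bijOn_image.invOn_invFunOn
  refine ⟨Function.invFunOn f S ∘ g, (hf.bijOn_image.symm hinv.symm).comp hgbij, ?_⟩
  exact hgmono.congr fun i hi => (hinv.2 (hgbij.mapsTo hi)).symm

section Reduced

variable {α : Type*} [AddCommGroup α] {S : Finset α}

theorem ne_zero_of_eq_or_eq_neg (hS : ∀ s ∈ S, ∀ t ∈ S, s ≠ -t) {s x : α} (hs : s ∈ S)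
    (hx : x = s ∨ x = -s) : x ≠ 0 := by
  have hs0 : s ≠ 0 := fun h => hS s hs s hs (by simp [h])
  rcases hx with rfl | rfl <;> simpa using hs0

variable [DecidableEq α] {ι : Type*} [Fintype ι] {H : ι → α}

theorem card_filter_ne_zero_eq_card (hS : ∀ s ∈ S, ∀ t ∈ S, s ≠ -t)
    (hmem : ∀ c, H c ≠ 0 → H c ∈ S ∨ -H c ∈ S)
    (hone : ∀ s ∈ S, (univ.filter fun c => H c = s ∨ H c = -s).card = 1) :
    (univ.filter fun c => H c ≠ 0).card = S.card := by
  let normalize : α → α := fun x => if x ∈ S then x else -x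
  have hnormalize : ∀ x s, s ∈ S → (x ≠ 0 ∧ normalize x = s ↔ x = s ∨ x = -s) := by
    intro x s hs
    refine ⟨fun ⟨hx, h⟩ => ?_, fun h => ⟨ne_zero_of_eq_or_eq_neg hS hs h, ?_⟩⟩
    · by_cases hxS : x ∈ S <;> simp only [normalize, hxS, if_true, if_false] at h
      · exact .inl h
      · exact .inr (neg_eq_iff_eq_neg.mp h)
    · have hns : -s ∉ S := fun h => hS s hs (-s) h (neg_neg s).symm
      rcases h with rfl | rfl <;> simp [normalize, hs, hns]
  have hmaps : Set.MapsTo (normalize ∘ H) (univ.filter fun c => H c ≠ 0) S := fun c hc => by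
    simp only [Function.comp, normalize]
    split_ifs with h
    exacts [h, (hmem c (mem_filter.mp hc).2).resolve_left h]
  refine card_nbij (normalize ∘ H) hmaps (fun c hc c' hc' h => ?_) (fun s hs => ?_)
  · have hs := hmaps hc
    have hc := (hnormalize (H c) _ hs).mp ⟨(mem_filter.mp hc).2, rfl⟩
    have hc' := (hnormalize (H c') _ hs).mp ⟨(mem_filter.mp hc').2, h.symm⟩
    exact card_le_one.mp (hone _ hs).le c (by simpa using hc) c' (by simpa using hc')
  · obtain ⟨c, hc⟩ := card_eq_one.mp (hone s hs)
    have hcs : c ∈ univ.filter fun c => H c = s ∨ H c = -s := by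
      rw [hc]; exact mem_singleton_self c
    have := (hnormalize (H c) s hs).mpr (mem_filter.mp hcs).2
    exact ⟨c, by simpa using this.1, this.2⟩

theorem card_filter_eq_or_eq_neg_eq_one_of_bijOn (hS : ∀ s ∈ S, ∀ t ∈ S, s ≠ -t)
    {ψ : ι → α} (hψ : Set.BijOn ψ {c | H c ≠ 0} S)
    (hHψ : ∀ c, H c ≠ 0 → H c = ψ c ∨ H c = -ψ c)
    {s : α} (hs : s ∈ S) : (univ.filter fun c => H c = s ∨ H c = -s).card = 1 := by
  obtain ⟨c₀, hc₀, rfl⟩ := hψ.surjOn hs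
  refine card_eq_one.mpr ⟨c₀, ext fun c => ?_⟩
  simp only [mem_filter, mem_univ, true_and, mem_singleton]
  refine ⟨fun hc => ?_, fun h => h ▸ hHψ c₀ hc₀⟩
  have hc0 := ne_zero_of_eq_or_eq_neg hS hs hc
  have hψc := hψ.mapsTo hc0
  refine hψ.injOn hc0 hc₀ ?_
  rcases hHψ c hc0 with h | h <;> rcases hc with h' | h'
  · exact h.symm.trans h'
  · exact absurd (h.symm.trans h') (hS _ hψc _ hs)
  · exact absurd (neg_eq_iff_eq_neg.mp (h.symm.trans h')) (hS _ hψc _ hs)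
  · exact neg_injective (h.symm.trans h')

end Reduced

section Weights

variable {α : Type*} [Zero α] [DecidableEq α] {m n : ℕ}

theorem sum_rowWeight (A : Matrix (Fin m) (Fin n) α) :
    ∑ i, rowWeight A i = (univ.filter fun p : Fin m × Fin n => A p.1 p.2 ≠ 0).card := by
  simp [rowWeight, card_filter, Fintype.sum_prod_type]

theorem sum_colWeight (A : Matrix (Fin m) (Fin n) α) :
    ∑ j, colWeight A j = (univ.filter fun p : Fin m × Fin n => A p.1 p.2 ≠ 0).card := by
  simp [colWeight, card_filter, Fintype.sum_prod_type]
  exact sum_comm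

theorem exists_ne_zero_of_rowWeight_pos {A : Matrix (Fin m) (Fin n) α} {i : Fin m}
    (h : 0 < rowWeight A i) : ∃ j, A i j ≠ 0 := by
  obtain ⟨j, hj⟩ := card_pos.mp h
  exact ⟨j, (mem_filter.mp hj).2⟩

theorem exists_ne_zero_of_colWeight_pos {A : Matrix (Fin m) (Fin n) α} {j : Fin n}
    (h : 0 < colWeight A j) : ∃ i, A i j ≠ 0 := by
  obtain ⟨i, hi⟩ := card_pos.mp h
  exact ⟨i, (mem_filter.mp hi).2⟩

variable {β : Type*} [Zero β] [DecidableEq β] {A : Matrix (Fin m) (Fin n) α}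
  {B : Matrix (Fin m) (Fin n) β}

theorem rowWeight_eq_of_ne_zero_iff (h : ∀ i j, B i j ≠ 0 ↔ A i j ≠ 0) (i : Fin m) :
    rowWeight B i = rowWeight A i := by
  simp only [rowWeight, h]

theorem colWeight_eq_of_ne_zero_iff (h : ∀ i j, B i j ≠ 0 ↔ A i j ≠ 0) (j : Fin n) :
    colWeight B j = colWeight A j := by
  simp only [colWeight, h]

end Weights

theorem IsGHA.card_eq_sum {α : Type*} [AddCommGroup α] [DecidableEq α] {m n : ℕ}
    {S : Finset α} {hw : Fin m → ℕ} {kw : Fin n → ℕ} {H : Matrix (Fin m) (Fin n) α}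
    (hH : IsGHA S hw kw H) (hS : ∀ s ∈ S, ∀ t ∈ S, s ≠ -t) :
    S.card = ∑ i, hw i ∧ S.card = ∑ j, kw j := by
  obtain ⟨hrow, hcol, hmem, hone⟩ := hH
  have hcard := card_filter_ne_zero_eq_card (H := fun p : Fin m × Fin n => H p.1 p.2) hS
    (fun p => hmem p.1 p.2) hone
  simp only [← hrow, ← hcol, sum_rowWeight, sum_colWeight, hcard, and_self]

theorem IsNASM.exists_isGHA_nonzeroSumSimpleNat {m n v : ℕ} [NeZero v]
    {A : Matrix (Fin m) (Fin n) ℤ} (hA : IsNASM A) (hrow : ∀ i, ∃ j, A i j ≠ 0)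
    (hcol : ∀ j, ∃ i, A i j ≠ 0) {S : Finset (ZMod v)}
    (hS : ∀ s ∈ S, ∀ t ∈ S, s ≠ -t)
    (hcard : (univ.filter fun p : Fin m × Fin n => A p.1 p.2 ≠ 0).card = S.card) :
    ∃ H : Matrix (Fin m) (Fin n) (ZMod v),
      IsGHA S (rowWeight A) (colWeight A) H ∧ NonzeroSumSimpleNat H := by
  obtain ⟨hA1, hArow, hAcol⟩ := hA
  obtain ⟨ψ, hψ, hmono⟩ := Finset.exists_bijOn_strictMonoOn_comp
    (f := fun s : ZMod v => |s.valMinAbs|)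
    (fun s hs t ht h => (ZMod.abs_valMinAbs_eq_abs_valMinAbs.mp h).resolve_right (hS s hs t ht))
    hcard
  set r : Fin m → Fin n → ℤ := fun i j => |(ψ (i, j)).valMinAbs| with hr
  set H : Matrix (Fin m) (Fin n) (ZMod v) := fun i j => ((A i j * r i j : ℤ) : ZMod v) with hH
  have hψS : ∀ i j, A i j ≠ 0 → ψ (i, j) ∈ S := fun i j h => hψ.mapsTo (by simp [h])
  have hr0 : ∀ i j, A i j ≠ 0 → 0 < r i j := fun i j h => abs_pos.mpr
    ((ZMod.valMinAbs_eq_zero _).not.mpr (ne_zero_of_eq_or_eq_neg hS (hψS i j h) (.inl rfl)))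
  have hrv : ∀ i j, A i j ≠ 0 → 2 * r i j < v := fun i j h =>
    ZMod.two_mul_abs_valMinAbs_lt (hS _ (hψS i j h) _ (hψS i j h))
  have hH0 : ∀ i j, H i j ≠ 0 ↔ A i j ≠ 0 := fun i j => by
    refine ⟨fun h hA => h (by simp [hH, hA]), fun h => ?_⟩
    exact ZMod.intCast_ne_zero_of_two_mul_abs_lt
      (two_mul_abs_sign_mul_lt ((hA1 i j).resolve_left h) (hr0 i j h) (hrv i j h))
      (mul_ne_zero h (hr0 i j h).ne')
  have hHψ : ∀ i j, H i j ≠ 0 → H i j = ψ (i, j) ∨ H i j = -ψ (i, j) := fun i j h => by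
    rcases (hA1 i j).resolve_left ((hH0 i j).mp h) with hA | hA <;>
      rcases ZMod.intCast_abs_valMinAbs_eq_or_eq_neg (ψ (i, j)) with h' | h' <;>
      simp [hH, hr, hA, h']
  have hmem : ∀ i j, H i j ≠ 0 → H i j ∈ S ∨ -H i j ∈ S := fun i j h => by
    have := hψS i j ((hH0 i j).mp h)
    rcases hHψ i j h with h' | h' <;> simp [h', this]
  refine ⟨H, ⟨rowWeight_eq_of_ne_zero_iff hH0, colWeight_eq_of_ne_zero_iff hH0, hmem,
    fun s hs => card_filter_eq_or_eq_neg_eq_one_of_bijOn (H := fun p : Fin m × Fin n => H p.1 p.2)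
      hS (by simpa [hH0] using hψ) (fun p hp => hHψ p.1 p.2 hp) hs⟩, fun i => ?_, fun j => ?_⟩
  · exact isSimpleList_reducedSeq_intCast (hArow i) (hA1 i)
      (fun j hj j' hj' hjj' => hmono (by simpa using hj) (by simpa using hj')
        (Prod.mk_lt_mk_iff_right.mpr hjj'))
      (hr0 i) (hrv i) (hrow i)
  · exact isSimpleList_reducedSeq_intCast (hAcol j) (fun i => hA1 i j)
      (fun i hi i' hi' hii' => hmono (by simpa using hi) (by simpa using hi')
        (Prod.mk_lt_mk_iff_left.mpr hii'))
      (fun i => hr0 i j) (fun i => hrv i j) (hcol j)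

theorem statement8_general (m n : ℕ) (hw : Fin m → ℕ) (kw : Fin n → ℕ)
    (hwpos : ∀ i, 0 < hw i) (kwpos : ∀ j, 0 < kw j)
    (hNASM : ∃ A : Matrix (Fin m) (Fin n) ℤ, IsNASM A ∧
        (∀ i, rowWeight A i = hw i) ∧ (∀ j, colWeight A j = kw j))
    (v : ℕ) (hv : 2 ≤ v) (S : Finset (ZMod v))
    (hSred : ∀ s ∈ S, ∀ t ∈ S, s ≠ -t) :
    (∃ H : Matrix (Fin m) (Fin n) (ZMod v),
        IsGHA S hw kw H ∧ NonzeroSumSimpleNat H) ↔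
      (S.card = ∑ i, hw i ∧ S.card = ∑ j, kw j) := by
  refine ⟨fun ⟨_, hH, _⟩ => hH.card_eq_sum hSred, fun ⟨hcard, _⟩ => ?_⟩
  have : NeZero v := ⟨by omega⟩
  obtain ⟨A, hA, hArow, hAcol⟩ := hNASM
  obtain rfl : hw = rowWeight A := funext fun i => (hArow i).symm
  obtain rfl : kw = colWeight A := funext fun j => (hAcol j).symm
  exact hA.exists_isGHA_nonzeroSumSimpleNat
    (fun i => exists_ne_zero_of_rowWeight_pos (hwpos i))
    (fun j => exists_ne_zero_of_colWeight_pos (kwpos j)) hSred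
    (by rw [← sum_rowWeight, hcard])

/-- Assume there is a NASM`(m, n; 𝐡, 𝐤)`. Let `v ≥ 2` and let
`S ⊆ Z_v \ {0}` be reduced (`s ≠ -t` for all `s, t ∈ S`). Then there exists a
nonzero sum and naturally simple GHA`_S(m, n; 𝐡, 𝐤)` over `Z_v` if and only if
`|S| = h_1 + ⋯ + h_m = k_1 + ⋯ + k_n`. -/
theorem statement8 (m n : ℕ) (hw : Fin m → ℕ) (kw : Fin n → ℕ)
    (hwpos : ∀ i, 0 < hw i) (kwpos : ∀ j, 0 < kw j)
    (hNASM : ∃ A : Matrix (Fin m) (Fin n) ℤ, IsNASM A ∧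
        (∀ i, rowWeight A i = hw i) ∧ (∀ j, colWeight A j = kw j))
    (v : ℕ) (hv : 2 ≤ v) (S : Finset (ZMod v))
    (hS0 : (0 : ZMod v) ∉ S) (hSred : ∀ s ∈ S, ∀ t ∈ S, s ≠ -t) :
    (∃ H : Matrix (Fin m) (Fin n) (ZMod v),
        IsGHA S hw kw H ∧ NonzeroSumSimpleNat H) ↔
      (S.card = ∑ i, hw i ∧ S.card = ∑ j, kw j) :=
  statement8_general m n hw kw hwpos kwpos hNASM v hv S hSred
end

section
/- Let A=(a_{ij}) be an m×n matrix with entries in {0,1} in which every row and every column contains at least one nonzero entry. Define R = {(i,j) : a_{ij} = 1 and a_{ij'} = 0 for all j' with j < j' ≤ n}, C = {(i,j) : a_{ij} = 1 and a_{i'j} = 0 for all i' with i < i' ≤ m}, and L = R ∩ C. Let Φ be the simple graph with vertex set R ∪ C in which distinct vertices p=(i,j) and q=(u,v) are adjacent if and only if one of p,q lies in R, the other lies in C, and either i = u or j = v. Then Φ is a forest (contains no cycle), and every connected component of Φ contains exactly one vertex belonging to L. -/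
/-- The set of positions of the last nonzero entry of each row of the `{0,1}`-matrix `A`. -/
def lastOfRow {m n : ℕ} (A : Matrix (Fin m) (Fin n) ℕ) : Set (Fin m × Fin n) :=
  {p | A p.1 p.2 = 1 ∧ ∀ j' : Fin n, p.2 < j' → A p.1 j' = 0}

/-- The set of positions of the last nonzero entry of each column of the `{0,1}`-matrix `A`. -/
def lastOfCol {m n : ℕ} (A : Matrix (Fin m) (Fin n) ℕ) : Set (Fin m × Fin n) :=
  {p | A p.1 p.2 = 1 ∧ ∀ i' : Fin m, p.1 < i' → A i' p.2 = 0}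

/-- The graph `Φ` on vertex set `R ∪ C`: distinct vertices are adjacent iff one lies in
`R`, the other lies in `C`, and they share a row index or a column index. -/
def Phi {m n : ℕ} (A : Matrix (Fin m) (Fin n) ℕ) :
    SimpleGraph {p : Fin m × Fin n // p ∈ lastOfRow A ∪ lastOfCol A} :=
  SimpleGraph.fromRel (fun p q =>
    (p : Fin m × Fin n) ∈ lastOfRow A ∧ (q : Fin m × Fin n) ∈ lastOfCol A ∧
      ((p : Fin m × Fin n).1 = (q : Fin m × Fin n).1 ∨
        (p : Fin m × Fin n).2 = (q : Fin m × Fin n).2))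

/-! A vertex of `R` has a parent, the vertex of `C` in its column, and any other vertex the
vertex of `R` in its row. The parent lies below `x` in its column or to its right in its row,
so `x ≤ parent x` in the product order; the edges of `Φ` are exactly the pairs
`{x, parent x}` with `parent x ≠ x`, and the fixed points of `parent` are the vertices of `L`.
So `Φ` is the graph of an inflationary self-map of a finite partial order. In such a graph the
descendants of `x` contain `x` but not `parent x`, and `{x, parent x}` is the only edge leaving
them, so every edge is a bridge. A maximal vertex of a component is a fixed point, and two fixed
points in one component coincide because any two vertices of a component have a common
iterate. -/

namespace SimpleGraph

variable {V : Type*} (f : V → V)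

def functionalGraph : SimpleGraph V := fromRel fun x y => f x = y

variable {f}

lemma functionalGraph_adj {x y : V} :
    (functionalGraph f).Adj x y ↔ x ≠ y ∧ (f x = y ∨ f y = x) := fromRel_adj ..

lemma functionalGraph_reachable_apply (x : V) : (functionalGraph f).Reachable x (f x) := by
  by_cases hx : f x = x
  · rw [hx]
  · exact (functionalGraph_adj.2 ⟨Ne.symm hx, .inl rfl⟩).reachable

lemma exists_iterate_eq_of_reachable {x y : V} (h : (functionalGraph f).Reachable x y) :
    ∃ k l, f^[k] x = f^[l] y := by
  obtain ⟨p⟩ := h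
  induction p with
  | nil => exact ⟨0, 0, rfl⟩
  | cons hadj _ ih =>
    obtain ⟨k, l, h⟩ := ih
    rcases (functionalGraph_adj.1 hadj).2 with rfl | rfl
    · exact ⟨k + 1, l, h⟩
    · exact ⟨k, l + 1, by rw [← Function.iterate_succ_apply, Function.iterate_succ_apply', h,
        Function.iterate_succ_apply']⟩

lemma eq_of_reachable_of_isFixedPt {x y : V} (h : (functionalGraph f).Reachable x y)
    (hx : Function.IsFixedPt f x) (hy : Function.IsFixedPt f y) : x = y := by
  obtain ⟨k, l, h⟩ := exists_iterate_eq_of_reachable h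
  rwa [(hx.iterate k).eq, (hy.iterate l).eq] at h

section PartialOrder

variable [PartialOrder V]

lemma isBridge_functionalGraph (hf : ∀ x, x ≤ f x) {x : V} (hx : f x ≠ x) :
    (functionalGraph f).IsBridge s(x, f x) := by
  rw [isBridge_iff_forall_walk_mem_edges]
  intro p
  set S := {z | ∃ k, f^[k] z = x}
  have hfx : f x ∉ S := by
    rintro ⟨k, hk⟩
    exact hx (le_antisymm ((Function.id_le_iterate_of_id_le hf k (f x)).trans_eq hk) (hf x))
  obtain ⟨⟨⟨a, b⟩, hab⟩, hd, ⟨k, hk⟩, hbS⟩ := p.exists_boundary_dart S ⟨0, rfl⟩ hfx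
  obtain ⟨rfl, rfl⟩ : a = x ∧ b = f x := by
    rcases (functionalGraph_adj.1 hab).2 with h | h
    · cases k with
      | zero => exact ⟨hk, hk ▸ h.symm⟩
      | succ k => exact (hbS ⟨k, by rwa [← h, ← Function.iterate_succ_apply]⟩).elim
    · exact (hbS ⟨k + 1, by rwa [Function.iterate_succ_apply, h]⟩).elim
  exact p.edges_eq_map_darts ▸ List.mem_map_of_mem hd

theorem isAcyclic_functionalGraph (hf : ∀ x, x ≤ f x) : (functionalGraph f).IsAcyclic := by
  refine isAcyclic_iff_forall_adj_isBridge.2 fun x y hxy => ?_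
  rcases functionalGraph_adj.1 hxy with ⟨hne, rfl | rfl⟩
  · exact isBridge_functionalGraph hf (Ne.symm hne)
  · exact Sym2.eq_swap ▸ isBridge_functionalGraph hf hne

lemma exists_isFixedPt_reachable [Finite V] (hf : ∀ x, x ≤ f x) (x : V) :
    ∃ y, (functionalGraph f).Reachable x y ∧ Function.IsFixedPt f y := by
  obtain ⟨y, hxy, hmax⟩ := (Set.toFinite {y | (functionalGraph f).Reachable x y}).exists_maximal
    ⟨x, .rfl⟩
  exact ⟨y, hxy, (hmax (hxy.trans (functionalGraph_reachable_apply y)) (hf y)).antisymm (hf y)⟩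

theorem existsUnique_isFixedPt_of_connectedComponent [Finite V] (hf : ∀ x, x ≤ f x)
    (c : (functionalGraph f).ConnectedComponent) :
    ∃! x, (functionalGraph f).connectedComponentMk x = c ∧ Function.IsFixedPt f x := by
  obtain ⟨x, rfl⟩ := c.exists_rep
  obtain ⟨y, hxy, hy⟩ := exists_isFixedPt_reachable hf x
  refine ⟨y, ⟨ConnectedComponent.sound hxy.symm, hy⟩, fun z ⟨hz, hz'⟩ => ?_⟩
  exact eq_of_reachable_of_isFixedPt ((ConnectedComponent.eq.1 hz).trans hxy) hz' hy

end PartialOrder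

end SimpleGraph

section Matrix

variable {m n : ℕ} {A : Matrix (Fin m) (Fin n) ℕ}

lemma le_of_mem_lastOfRow {i : Fin m} {j j' : Fin n} (h : (i, j) ∈ lastOfRow A)
    (h' : A i j' ≠ 0) : j' ≤ j :=
  not_lt.1 fun hlt => h' (h.2 j' hlt)

lemma eq_of_mem_lastOfRow {i : Fin m} {j j' : Fin n} (h : (i, j) ∈ lastOfRow A)
    (h' : (i, j') ∈ lastOfRow A) : j = j' :=
  le_antisymm (le_of_mem_lastOfRow h' (h.1 ▸ one_ne_zero))
    (le_of_mem_lastOfRow h (h'.1 ▸ one_ne_zero))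

lemma eq_of_mem_lastOfCol {i i' : Fin m} {j : Fin n} (h : (i, j) ∈ lastOfCol A)
    (h' : (i', j) ∈ lastOfCol A) : i = i' :=
  eq_of_mem_lastOfRow (A := A.transpose) h h'

lemma exists_mem_lastOfRow (h01 : ∀ i j, A i j = 0 ∨ A i j = 1) {i : Fin m} {j : Fin n}
    (h : A i j ≠ 0) : ∃ j', j ≤ j' ∧ (i, j') ∈ lastOfRow A := by
  set s := Finset.univ.filter fun j' => A i j' ≠ 0
  have hj : j ∈ s := by simpa [s] using h
  have hmax : A i (s.max' ⟨j, hj⟩) ≠ 0 := by simpa [s] using s.max'_mem ⟨j, hj⟩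
  refine ⟨s.max' ⟨j, hj⟩, s.le_max' j hj, (h01 _ _).resolve_left hmax, fun j' hj' => ?_⟩
  by_contra hne
  exact (s.le_max' j' (by simpa [s] using hne)).not_gt hj'

lemma exists_mem_lastOfCol (h01 : ∀ i j, A i j = 0 ∨ A i j = 1) {i : Fin m} {j : Fin n}
    (h : A i j ≠ 0) : ∃ i', i ≤ i' ∧ (i', j) ∈ lastOfCol A :=
  exists_mem_lastOfRow (A := A.transpose) (fun j i => h01 i j) h

lemma ne_zero_of_mem {p : Fin m × Fin n} (hp : p ∈ lastOfRow A ∪ lastOfCol A) :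
    A p.1 p.2 ≠ 0 := by
  rcases hp with h | h <;> exact h.1 ▸ one_ne_zero

end Matrix

namespace Phi

variable {m n : ℕ} {A : Matrix (Fin m) (Fin n) ℕ}

open Classical in
noncomputable def parent (h01 : ∀ i j, A i j = 0 ∨ A i j = 1)
    (x : {p // p ∈ lastOfRow A ∪ lastOfCol A}) : {p // p ∈ lastOfRow A ∪ lastOfCol A} :=
  if x.1 ∈ lastOfRow A then
    ⟨((exists_mem_lastOfCol h01 (ne_zero_of_mem x.2)).choose, x.1.2),
      .inr (exists_mem_lastOfCol h01 (ne_zero_of_mem x.2)).choose_spec.2⟩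
  else
    ⟨(x.1.1, (exists_mem_lastOfRow h01 (ne_zero_of_mem x.2)).choose),
      .inl (exists_mem_lastOfRow h01 (ne_zero_of_mem x.2)).choose_spec.2⟩

variable (h01 : ∀ i j, A i j = 0 ∨ A i j = 1)

lemma le_parent (x : {p // p ∈ lastOfRow A ∪ lastOfCol A}) : x ≤ parent h01 x := by
  unfold parent
  split_ifs
  · exact Prod.mk_le_mk.2 ⟨(exists_mem_lastOfCol h01 (ne_zero_of_mem x.2)).choose_spec.1, le_rfl⟩
  · exact Prod.mk_le_mk.2 ⟨le_rfl, (exists_mem_lastOfRow h01 (ne_zero_of_mem x.2)).choose_spec.1⟩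

variable {x y : {p // p ∈ lastOfRow A ∪ lastOfCol A}}

lemma parent_eq_iff_of_mem (hx : x.1 ∈ lastOfRow A) :
    parent h01 x = y ↔ y.1 ∈ lastOfCol A ∧ y.1.2 = x.1.2 := by
  have hspec := (exists_mem_lastOfCol h01 (ne_zero_of_mem x.2)).choose_spec.2
  rw [parent, if_pos hx]
  constructor
  · rintro rfl
    exact ⟨hspec, rfl⟩
  · rintro ⟨hy, hyx⟩
    refine Subtype.ext (Prod.ext (eq_of_mem_lastOfCol hspec ?_) hyx.symm)
    exact hyx ▸ hy

lemma parent_eq_iff_of_notMem (hx : x.1 ∉ lastOfRow A) :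
    parent h01 x = y ↔ y.1 ∈ lastOfRow A ∧ y.1.1 = x.1.1 := by
  have hspec := (exists_mem_lastOfRow h01 (ne_zero_of_mem x.2)).choose_spec.2
  rw [parent, if_neg hx]
  constructor
  · rintro rfl
    exact ⟨hspec, rfl⟩
  · rintro ⟨hy, hyx⟩
    refine Subtype.ext (Prod.ext hyx.symm (eq_of_mem_lastOfRow hspec ?_))
    exact hyx ▸ hy

lemma isFixedPt_parent_iff :
    Function.IsFixedPt (parent h01) x ↔ x.1 ∈ lastOfRow A ∩ lastOfCol A := by
  by_cases hx : x.1 ∈ lastOfRow A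
  · simp [Function.IsFixedPt, parent_eq_iff_of_mem h01 hx, hx]
  · simp [Function.IsFixedPt, parent_eq_iff_of_notMem h01 hx, hx]

theorem eq_functionalGraph_parent : Phi A = SimpleGraph.functionalGraph (parent h01) := by
  ext x y
  rw [Phi, SimpleGraph.fromRel_adj, SimpleGraph.functionalGraph_adj]
  refine and_congr_right fun hne => ?_
  have hxC : x.1 ∉ lastOfRow A → x.1 ∈ lastOfCol A := x.2.resolve_left
  have hyC : y.1 ∉ lastOfRow A → y.1 ∈ lastOfCol A := y.2.resolve_left
  have hrow : x.1 ∈ lastOfRow A → y.1 ∈ lastOfRow A → x.1.1 ≠ y.1.1 := fun hxR hyR h =>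
    hne (Subtype.ext (Prod.ext h (eq_of_mem_lastOfRow hxR (h ▸ hyR))))
  by_cases hxR : x.1 ∈ lastOfRow A <;> by_cases hyR : y.1 ∈ lastOfRow A <;>
    simp only [parent_eq_iff_of_mem h01, parent_eq_iff_of_notMem h01, hxR, hyR, true_and,
      false_and, not_false_eq_true, false_or, or_false] <;> grind

end Phi

theorem statement15_general (m n : ℕ) (A : Matrix (Fin m) (Fin n) ℕ)
    (h01 : ∀ i j, A i j = 0 ∨ A i j = 1) :
    (Phi A).IsAcyclic ∧
    ∀ c : (Phi A).ConnectedComponent,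
      ∃! x : {p : Fin m × Fin n // p ∈ lastOfRow A ∪ lastOfCol A},
        (Phi A).connectedComponentMk x = c ∧
          (x : Fin m × Fin n) ∈ lastOfRow A ∩ lastOfCol A := by
  rw [Phi.eq_functionalGraph_parent h01]
  refine ⟨SimpleGraph.isAcyclic_functionalGraph (Phi.le_parent h01), fun c => ?_⟩
  simpa only [Phi.isFixedPt_parent_iff h01] using
    SimpleGraph.existsUnique_isFixedPt_of_connectedComponent (Phi.le_parent h01) c

/-- For a `{0,1}`-matrix `A` each of whose rows and columns has a
nonzero entry, the graph `Φ` is a forest, and every connected component of `Φ` contains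
exactly one vertex of `L = R ∩ C`. -/
theorem statement15 (m n : ℕ) (A : Matrix (Fin m) (Fin n) ℕ)
    (h01 : ∀ i j, A i j = 0 ∨ A i j = 1)
    (hrow : ∀ i, ∃ j, A i j ≠ 0) (hcol : ∀ j, ∃ i, A i j ≠ 0) :
    (Phi A).IsAcyclic ∧
    ∀ c : (Phi A).ConnectedComponent,
      ∃! x : {p : Fin m × Fin n // p ∈ lastOfRow A ∪ lastOfCol A},
        (Phi A).connectedComponentMk x = c ∧
          (x : Fin m × Fin n) ∈ lastOfRow A ∩ lastOfCol A :=
  statement15_general m n A h01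
end

section
/- Let v ≥ 2 and let S be a subset of Z_v \ {0} such that s ≠ -t for all distinct s,t ∈ S and s ≠ -s for every s ∈ S. Let 𝐡=(h_1,…,h_m) and 𝐤=(k_1,…,k_n) be sequences of positive integers with |S| = h_1+⋯+h_m = k_1+⋯+k_n, and suppose 𝐡 and 𝐤 satisfy the Gale–Ryser condition. Let Γ = Cay(Z_v,S) be the simple graph on vertex set Z_v with x adjacent to y iff x-y ∈ S ∪ -S. Then there exist paths P_1,…,P_m and Q_1,…,Q_n in Γ, with P_i of length h_i (h_i edges) and Q_j of length k_j, such that: every edge of Γ lies in exactly one of the translates P_i + g (1 ≤ i ≤ m, g ∈ Z_v), so these translates form a Z_v-regular path decomposition of Γ; every edge of Γ lies in exactly one of the translates Q_j + g (1 ≤ j ≤ n, g ∈ Z_v); and for all i, j, g, g', the paths P_i + g and Q_j + g' share at most one edge (the two decompositions are orthogonal). -/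
/-- The Cayley graph `Cay(Z_v, S)`: `x` and `y` are adjacent iff `x - y ∈ S ∪ -S`. -/
def cayGraph {v : ℕ} (S : Finset (ZMod v)) : SimpleGraph (ZMod v) :=
  SimpleGraph.fromRel (fun x y => x - y ∈ S)

open Finset

lemma Finset.sum_le_sum_of_card_eq {ι M : Type*} [DecidableEq ι] [AddCommMonoid M] [LinearOrder M]
    [IsOrderedCancelAddMonoid M] {s t : Finset ι} {f : ι → M} (hst : #s = #t)
    (h : ∀ a ∈ s \ t, ∀ b ∈ t \ s, f a ≤ f b) : ∑ i ∈ s, f i ≤ ∑ i ∈ t, f i := by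
  rw [← sum_sdiff_le_sum_sdiff]
  rcases (s \ t).eq_empty_or_nonempty with hempty | hne
  · have : t \ s = ∅ := by rw [← card_eq_zero, ← card_sdiff_comm hst, hempty, card_empty]
    simp [hempty, this]
  obtain ⟨a, ha, hmax⟩ := exists_max_image (s \ t) f hne
  calc ∑ i ∈ s \ t, f i ≤ #(s \ t) • f a := sum_le_card_nsmul _ _ _ hmax
    _ = #(t \ s) • f a := by rw [card_sdiff_comm hst]
    _ ≤ ∑ i ∈ t \ s, f i := card_nsmul_le_sum _ _ _ fun b hb => h a ha b hb

/-- The indices of the `u` largest entries of `k`. -/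
def topIndices {n : ℕ} (k : Fin n → ℕ) (u : ℕ) : Finset (Fin n) :=
  (univ.filter fun j : Fin n => (j : ℕ) < u).map (Fin.revPerm.trans (Tuple.sort k)).toEmbedding

lemma card_topIndices {n : ℕ} (k : Fin n → ℕ) {u : ℕ} (hu : u ≤ n) : #(topIndices k u) = u := by
  rw [topIndices, card_map, Fin.card_filter_val_lt, min_eq_right hu]

lemma sum_topIndices {n : ℕ} (k : Fin n → ℕ) (u : ℕ) :
    ∑ j ∈ topIndices k u, k j =
      ∑ j ∈ univ.filter (fun j : Fin n => (j : ℕ) < u), decRearrange k j := by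
  rw [topIndices, sum_map]
  rfl

lemma le_of_notMem_topIndices {n : ℕ} (k : Fin n → ℕ) {u : ℕ} {a b : Fin n}
    (ha : a ∉ topIndices k u) (hb : b ∈ topIndices k u) : k a ≤ k b := by
  obtain ⟨b, hbu, rfl⟩ := mem_map.mp hb
  obtain ⟨a, rfl⟩ := (Fin.revPerm.trans (Tuple.sort k)).surjective a
  have hau : ¬ (a : ℕ) < u := fun hau => ha (mem_map_of_mem _ (by simpa using hau))
  simp only [mem_filter, mem_univ, true_and] at hbu
  exact Tuple.monotone_sort k (Fin.rev_le_rev.mpr (by omega))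

lemma GaleRyser.sum_le_sum_min {m n : ℕ} {h : Fin m → ℕ} {k : Fin n → ℕ} (hGR : GaleRyser h k)
    (T : Finset (Fin n)) : ∑ j ∈ T, k j ≤ ∑ i, min (h i) #T := by
  rcases Nat.eq_zero_or_pos #T with hT | hT
  · simp [card_eq_zero.mp hT]
  have hTn : #T ≤ n := by simpa using card_le_univ T
  calc ∑ j ∈ T, k j ≤ ∑ j ∈ topIndices k #T, k j :=
        sum_le_sum_of_card_eq (card_topIndices k hTn).symm fun a ha b hb =>
          le_of_notMem_topIndices k (mem_sdiff.mp ha).2 (mem_sdiff.mp hb).1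
    _ = _ := sum_topIndices k #T
    _ ≤ _ := hGR _ hT hTn

lemma exists_dominating_subset {m : ℕ} (h : Fin m → ℕ) {c : ℕ}
    (hc : c ≤ #{i | 0 < h i}) :
    ∃ D : Finset (Fin m), #D = c ∧ (∀ i ∈ D, 0 < h i) ∧ ∀ i ∈ D, ∀ i' ∉ D, h i' ≤ h i := by
  have hcm : c ≤ m := hc.trans (card_filter_le _ _) |>.trans_eq (card_fin m)
  refine ⟨topIndices h c, card_topIndices h hcm, fun i hi => Nat.pos_of_ne_zero fun hi0 => ?_,
    fun i hi i' hi' => le_of_notMem_topIndices h hi' hi⟩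
  have hsub : ({i' | 0 < h i'} : Finset (Fin m)) ⊆ (topIndices h c).erase i := fun i' hi' => by
    have hpos : 0 < h i' := (mem_filter.mp hi').2
    refine mem_erase.mpr ⟨fun he => by subst he; omega, ?_⟩
    by_contra hnot
    have := le_of_notMem_topIndices h hnot hi
    omega
  have := card_le_card hsub
  rw [card_erase_of_mem hi, card_topIndices h hcm] at this
  have : 0 < c := card_topIndices h hcm ▸ card_pos.mpr ⟨i, hi⟩
  omega

lemma forall_sum_le_sum_min_tail {m n : ℕ} {h : Fin m → ℕ} {k : Fin (n + 1) → ℕ}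
    (hcond : ∀ T : Finset (Fin (n + 1)), ∑ j ∈ T, k j ≤ ∑ i, min (h i) #T)
    {D : Finset (Fin m)} (hD : #D = k 0) (hpos : ∀ i ∈ D, 0 < h i)
    (hdom : ∀ i ∈ D, ∀ i' ∉ D, h i' ≤ h i) (T : Finset (Fin n)) :
    ∑ j ∈ T, k j.succ ≤ ∑ i, min (h i - if i ∈ D then 1 else 0) #T := by
  have hT := hcond (T.map (Fin.succEmb n))
  rw [sum_map, card_map, Fin.coe_succEmb] at hT
  -- If every row of `D` is longer than `#T`, shortening it leaves `min (h i) #T` unchanged;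
  -- otherwise the rows outside `D` have length at most `#T`, and `T ∪ {0}` gives the bound.
  by_cases hbig : ∀ i ∈ D, #T < h i
  · refine hT.trans_eq (sum_congr rfl fun i _ => ?_)
    split_ifs with hi
    · have := hbig i hi
      omega
    · rfl
  push Not at hbig
  obtain ⟨i₀, hi₀, hi₀T⟩ := hbig
  have h0 : (0 : Fin (n + 1)) ∉ T.map (Fin.succEmb n) := by simp [Fin.succ_ne_zero]
  have hT0 := hcond (cons 0 _ h0)
  rw [sum_cons, card_cons, sum_map, card_map, Fin.coe_succEmb] at hT0
  have hterm (i : Fin m) : min (h i) (#T + 1) ≤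
      min (h i - if i ∈ D then 1 else 0) #T + if i ∈ D then 1 else 0 := by
    split_ifs with hi
    · have := hpos i hi
      omega
    · have := hdom i₀ hi₀ i hi
      omega
  have hsum := sum_le_sum fun i (_ : i ∈ univ) => hterm i
  rw [sum_add_distrib, sum_boole, filter_univ_mem, hD, Nat.cast_id] at hsum
  omega

theorem exists_rows_of_forall_sum_le {m : ℕ} : ∀ {n : ℕ} (h : Fin m → ℕ) (k : Fin n → ℕ),
    ∑ i, h i = ∑ j, k j → (∀ T : Finset (Fin n), ∑ j ∈ T, k j ≤ ∑ i, min (h i) #T) →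
    ∃ M : Fin m → Finset (Fin n), (∀ i, #(M i) = h i) ∧ ∀ j, #{i | j ∈ M i} = k j
  | 0, h, k, hsum, _ => ⟨fun _ => ∅, fun i => by simp_all [sum_eq_zero_iff], fun j => j.elim0⟩
  | n + 1, h, k, hsum, hcond => by
    have hc : k 0 ≤ #{i | 0 < h i} := by
      have := hcond {0}
      rw [sum_singleton, card_singleton] at this
      refine this.trans_eq ?_
      rw [card_filter]
      exact sum_congr rfl fun i _ => by split_ifs <;> omega
    -- Ryser's greedy step: the `k 0` ones of column `0` go to `k 0` rows with the largest `h i`.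
    obtain ⟨D, hD, hpos, hdom⟩ := exists_dominating_subset h hc
    have hsum' : ∑ i, (h i - if i ∈ D then 1 else 0) = ∑ j : Fin n, k j.succ := by
      have hle (i : Fin m) : (if i ∈ D then 1 else 0) ≤ h i := by
        split_ifs with hi
        · exact hpos i hi
        · exact Nat.zero_le _
      have := sum_tsub_distrib univ fun i _ => hle i
      rw [sum_boole, filter_univ_mem, hD, Nat.cast_id] at this
      rw [this, hsum, Fin.sum_univ_succ, Nat.add_sub_cancel_left]
    obtain ⟨M, hrow, hcol⟩ := exists_rows_of_forall_sum_le _ _ hsum'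
      (forall_sum_le_sum_min_tail hcond hD hpos hdom)
    refine ⟨fun i => if i ∈ D then insert 0 ((M i).map (Fin.succEmb n))
      else (M i).map (Fin.succEmb n), fun i => ?_, fun j => ?_⟩
    · dsimp only
      split_ifs with hi
      · rw [card_insert_of_notMem (by simp [Fin.succ_ne_zero]), card_map, hrow, if_pos hi]
        have := hpos i hi
        omega
      · rw [card_map, hrow, if_neg hi, Nat.sub_zero]
    · cases j using Fin.cases <;> [rw [← hD]; rw [← hcol]] <;> congr 1 <;> ext i <;>
        by_cases hi : i ∈ D <;> simp [hi, Fin.succ_ne_zero]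

def IsIndexedPartition {α ι : Type*} (S : Finset α) (B : ι → Finset α) : Prop :=
  (∀ i, B i ⊆ S) ∧ ∀ t ∈ S, ∃! i, t ∈ B i

theorem exists_orthogonal_partitions {α ι κ : Type*} [DecidableEq α] [Nonempty α] [Fintype ι]
    [Fintype κ] [DecidableEq ι] [DecidableEq κ] (S : Finset α) (M : ι → Finset κ)
    (hS : #S = ∑ i, #(M i)) :
    ∃ (B : ι → Finset α) (B' : κ → Finset α), IsIndexedPartition S B ∧ IsIndexedPartition S B' ∧
      (∀ i, #(B i) = #(M i)) ∧ (∀ j, #(B' j) = #{i | j ∈ M i}) ∧ ∀ i j, #(B i ∩ B' j) ≤ 1 := by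
  set C : Finset (ι × κ) := {p | p.2 ∈ M p.1}
  have hmemC {p : ι × κ} : p ∈ C ↔ p.2 ∈ M p.1 := by simp [C]
  have hC : (C : Set (ι × κ)).encard = (S : Set α).encard := by
    simp only [Set.encard_coe_eq_coe_finsetCard, hS, C, card_filter, Fintype.sum_prod_type]
    simp
  obtain ⟨g, hg⟩ := C.finite_toSet.exists_bijOn_of_encard_eq hC
  have hginj {p q : ι × κ} (hp : p.2 ∈ M p.1) (hq : q.2 ∈ M q.1) (h : g p = g q) : p = q :=
    hg.injOn (hmemC.mpr hp) (hmemC.mpr hq) h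
  refine ⟨fun i => (M i).image fun j => g (i, j),
    fun j => (univ.filter fun i => j ∈ M i).image fun i => g (i, j),
    ⟨?_, ?_⟩, ⟨?_, ?_⟩, ?_, ?_, ?_⟩
  · rintro i _ ht
    obtain ⟨j, hj, rfl⟩ := mem_image.mp ht
    exact hg.mapsTo (hmemC.mpr hj)
  · intro t ht
    obtain ⟨p, hp, rfl⟩ := hg.surjOn ht
    refine ⟨p.1, mem_image.mpr ⟨p.2, hmemC.mp hp, rfl⟩, fun i hi => ?_⟩
    obtain ⟨j, hj, hgj⟩ := mem_image.mp hi
    exact congrArg Prod.fst (hginj hj (hmemC.mp hp) hgj)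
  · rintro j _ ht
    obtain ⟨i, hi, rfl⟩ := mem_image.mp ht
    exact hg.mapsTo (hmemC.mpr (mem_filter.mp hi).2)
  · intro t ht
    obtain ⟨p, hp, rfl⟩ := hg.surjOn ht
    refine ⟨p.2, mem_image.mpr ⟨p.1, mem_filter.mpr ⟨mem_univ _, hmemC.mp hp⟩, rfl⟩, fun j hj => ?_⟩
    obtain ⟨i, hi, hgi⟩ := mem_image.mp hj
    exact congrArg Prod.snd (hginj (mem_filter.mp hi).2 (hmemC.mp hp) hgi)
  · exact fun i => card_image_of_injOn fun j hj j' hj' h => congrArg Prod.snd (hginj hj hj' h)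
  · exact fun j => card_image_of_injOn fun i hi i' hi' h =>
      congrArg Prod.fst (hginj (mem_filter.mp hi).2 (mem_filter.mp hi').2 h)
  · intro i j
    have hcell : ∀ t ∈ (M i).image (fun j => g (i, j)) ∩
        (univ.filter fun i => j ∈ M i).image (fun i => g (i, j)), t = g (i, j) := by
      intro t ht
      obtain ⟨⟨j', hj', rfl⟩, ⟨i', hi', he⟩⟩ := And.imp mem_image.mp mem_image.mp (mem_inter.mp ht)
      obtain rfl : j' = j := congrArg Prod.snd (hginj hj' (mem_filter.mp hi').2 he.symm)
      rfl
    exact card_le_one.mpr fun a ha b hb => (hcell a ha).trans (hcell b hb).symm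

section SignClasses

variable {G : Type*} [AddCommGroup G]

/-- `±x`, encoded as the unordered pair `{x, -x}`. -/
def signClass (x : G) : Sym2 G := s(x, -x)

def edgeDiff : Sym2 G → Sym2 G :=
  Sym2.lift ⟨fun x y => signClass (y - x), fun x y => by
    simp only [signClass, neg_sub]; exact Sym2.eq_swap⟩

@[simp] lemma edgeDiff_mk (x y : G) : edgeDiff s(x, y) = signClass (y - x) := rfl

@[simp] lemma signClass_neg (x : G) : signClass (-x) = signClass x := by
  simp only [signClass, neg_neg]; exact Sym2.eq_swap

lemma signClass_eq_signClass_iff {x y : G} : signClass x = signClass y ↔ x = y ∨ x = -y := by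
  simp only [signClass, Sym2.eq_iff, neg_inj]
  constructor
  · rintro (⟨h, -⟩ | ⟨h, -⟩) <;> simp [h]
  · rintro (h | h) <;> simp [h]

lemma signClass_isDiag_iff {x : G} : (signClass x).IsDiag ↔ x = -x := Sym2.mk_isDiag_iff

lemma edgeDiff_mk_add_right (x y g : G) : edgeDiff s(x + g, y + g) = edgeDiff s(x, y) := by
  simp

lemma signClass_injOn {S : Set G} (hS : ∀ s ∈ S, ∀ t ∈ S, s ≠ -t) : S.InjOn signClass :=
  fun s hs t ht h => (signClass_eq_signClass_iff.mp h).resolve_right (hS s hs t ht)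

lemma exists_mk_eq_mk_add {x y a b : G} (h : edgeDiff s(x, y) = edgeDiff s(a, b)) :
    ∃ g, s(x, y) = s(a + g, b + g) := by
  rcases signClass_eq_signClass_iff.mp h with h | h
  · refine ⟨x - a, ?_⟩
    rw [add_sub_cancel, ← sub_add_cancel y x, h]
    congr 1; abel
  · refine ⟨y - a, ?_⟩
    rw [add_sub_cancel, ← sub_add_cancel x y, ← neg_sub, h, Sym2.eq_swap]
    congr 1; abel

lemma eq_of_mk_add_eq_mk_add {a b g g' : G} (hab : ¬ (edgeDiff s(a, b)).IsDiag)
    (h : s(a + g, b + g) = s(a + g', b + g')) : g = g' := by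
  rw [edgeDiff_mk, signClass_isDiag_iff, neg_sub] at hab
  rcases Sym2.eq_iff.mp h with ⟨h, -⟩ | ⟨h₁, h₂⟩
  · exact add_left_cancel h
  · refine absurd ?_ hab
    rw [← add_sub_add_right_eq_sub b a g, h₁, h₂, add_sub_add_right_eq_sub]

end SignClasses

section Decomposition

variable {G ι : Type*} [AddCommGroup G] {S : Finset G}

theorem existsUnique_translate_of_partition (hS : ∀ s ∈ S, ∀ t ∈ S, s ≠ -t) {B : ι → Finset G}
    (hB : IsIndexedPartition S B) {h : ι → ℕ} {P : (i : ι) → Fin (h i + 1) → G}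
    (e : (i : ι) → Fin (h i) ≃ B i)
    (hstep : ∀ i l, edgeDiff s(P i l.castSucc, P i l.succ) = signClass (e i l : G))
    {x y t : G} (ht : t ∈ S) (hxy : edgeDiff s(x, y) = signClass t) :
    ∃! ig : ι × G, ∃ l : Fin (h ig.1),
      s(x, y) = s(P ig.1 l.castSucc + ig.2, P ig.1 l.succ + ig.2) := by
  obtain ⟨i, hti, hi⟩ := hB.2 t ht
  obtain ⟨l, hl⟩ := (e i).surjective ⟨t, hti⟩
  have hstep' : edgeDiff s(P i l.castSucc, P i l.succ) = signClass t := by rw [hstep, hl]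
  obtain ⟨g, hg⟩ := exists_mk_eq_mk_add (hxy.trans hstep'.symm)
  refine ⟨(i, g), ⟨l, hg⟩, ?_⟩
  rintro ⟨i', g'⟩ ⟨l', hl'⟩
  have hlabel : (e i' l' : G) = t := signClass_injOn hS (hB.1 i' (e i' l').2) ht <| by
    rw [← hstep, ← edgeDiff_mk_add_right _ _ g', ← hl', hxy]
  obtain rfl : i' = i := hi i' (hlabel ▸ (e i' l').2)
  obtain rfl : l' = l :=
    (e i').injective (Subtype.ext (hlabel.trans (congrArg Subtype.val hl).symm))
  have hdiag : ¬ (edgeDiff s(P i' l'.castSucc, P i' l'.succ)).IsDiag := by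
    rw [hstep', signClass_isDiag_iff]; exact hS t ht t ht
  exact Prod.ext rfl (eq_of_mk_add_eq_mk_add hdiag (hl'.symm.trans hg))

theorem eq_of_mem_translates [DecidableEq G] (hS : ∀ s ∈ S, ∀ t ∈ S, s ≠ -t) {B B' : Finset G}
    (hBS : B ⊆ S) (hB'S : B' ⊆ S) (hBB' : #(B ∩ B') ≤ 1) {h k : ℕ}
    {P : Fin (h + 1) → G} {Q : Fin (k + 1) → G} (a : Fin h ≃ B) (b : Fin k ≃ B')
    (hP : ∀ l, edgeDiff s(P l.castSucc, P l.succ) = signClass (a l : G))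
    (hQ : ∀ l, edgeDiff s(Q l.castSucc, Q l.succ) = signClass (b l : G))
    {g g' : G} {e₁ e₂ : Sym2 G}
    (h₁ : ∃ l : Fin h, e₁ = s(P l.castSucc + g, P l.succ + g))
    (h₂ : ∃ l : Fin h, e₂ = s(P l.castSucc + g, P l.succ + g))
    (h₁' : ∃ l : Fin k, e₁ = s(Q l.castSucc + g', Q l.succ + g'))
    (h₂' : ∃ l : Fin k, e₂ = s(Q l.castSucc + g', Q l.succ + g')) : e₁ = e₂ := by
  have common {e : Sym2 G} {l : Fin h} {l' : Fin k} (hl : e = s(P l.castSucc + g, P l.succ + g))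
      (hl' : e = s(Q l'.castSucc + g', Q l'.succ + g')) : (a l : G) ∈ B ∩ B' := by
    have : (a l : G) = b l' := signClass_injOn hS (hBS (a l).2) (hB'S (b l').2) <| by
      rw [← hP, ← hQ, ← edgeDiff_mk_add_right _ _ g, ← hl, hl', edgeDiff_mk_add_right]
    exact mem_inter.mpr ⟨(a l).2, this ▸ (b l').2⟩
  obtain ⟨l₁, rfl⟩ := h₁
  obtain ⟨l₂, rfl⟩ := h₂
  obtain ⟨l₁', hl₁'⟩ := h₁'
  obtain ⟨l₂', hl₂'⟩ := h₂'
  have : l₁ = l₂ := a.injective <| Subtype.ext <|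
    card_le_one.mp hBB' _ (common rfl hl₁') _ (common rfl hl₂')
  rw [this]

end Decomposition

lemma alternating_sum_Ico_bounds {c : ℕ → ℤ} {a b : ℕ} (hab : a ≤ b)
    (hc : StrictMonoOn c (Set.Icc a b)) (ha : 0 < c a) :
    0 < (-1) ^ b * ∑ i ∈ Ico a (b + 1), (-1) ^ i * c i ∧
      (-1) ^ b * ∑ i ∈ Ico a (b + 1), (-1) ^ i * c i ≤ c b := by
  induction b, hab using Nat.le_induction with
  | base =>
    rw [Nat.Ico_succ_singleton, sum_singleton, ← mul_assoc, ← mul_pow]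
    simpa using ha
  | succ b hab ih =>
    obtain ⟨h₀, h₁⟩ := ih (hc.mono (Set.Icc_subset_Icc_right b.le_succ))
    have hlt : c b < c (b + 1) := hc ⟨hab, b.le_succ⟩ ⟨by omega, le_rfl⟩ b.lt_succ_self
    have key : (-1) ^ (b + 1) * ∑ i ∈ Ico a (b + 1 + 1), (-1) ^ i * c i
        = c (b + 1) - (-1) ^ b * ∑ i ∈ Ico a (b + 1), (-1) ^ i * c i := by
      rw [sum_Ico_succ_top (by omega), mul_add, ← mul_assoc, ← mul_pow, pow_succ]
      ring
    rw [key]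
    constructor <;> linarith

lemma injective_zigzag {v h : ℕ} {c : ℕ → ℤ} (hc : StrictMonoOn c (Set.Iio h))
    (hpos : ∀ i < h, 0 < c i) (hlt : ∀ i < h, c i < v) :
    Function.Injective fun l : Fin (h + 1) => ((∑ i ∈ range l, (-1) ^ i * c i : ℤ) : ZMod v) := by
  refine Function.Injective.of_lt_imp_ne fun l l' hll' heq => ?_
  obtain ⟨b, hb⟩ : ∃ b, (l' : ℕ) = b + 1 := ⟨l' - 1, by omega⟩
  have hbh : b < h := by omega
  obtain ⟨h₀, h₁⟩ := alternating_sum_Ico_bounds (c := c) (a := l) (b := b) (by omega)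
    (hc.mono fun i hi => by simp only [Set.mem_Iio]; exact hi.2.trans_lt hbh) (hpos l (by omega))
  set X := ∑ i ∈ Ico (l : ℕ) (b + 1), (-1) ^ i * c i with hXdef
  have habs : |X| = |(-1) ^ b * X| := by simp [abs_mul]
  have hX : X = 0 := by
    refine Int.eq_zero_of_abs_lt_dvd (m := v) ?_ (by rw [habs, abs_of_pos h₀]; linarith [hlt b hbh])
    rw [← ZMod.intCast_zmod_eq_zero_iff_dvd, hXdef, ← hb, sum_Ico_eq_sub _ (by omega), Int.cast_sub]
    exact sub_eq_zero.mpr heq.symm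
  simp [hX] at h₀

lemma signClass_neg_one_pow_mul {R : Type*} [Ring R] (n : ℕ) (x : R) :
    signClass ((-1) ^ n * x) = signClass x := by
  rcases neg_one_pow_eq_or R n with h | h <;> simp [h]

lemma signClass_natAbs_valMinAbs {v : ℕ} [NeZero v] (t : ZMod v) :
    signClass (t.valMinAbs.natAbs : ZMod v) = signClass t := by
  rw [ZMod.natCast_natAbs_valMinAbs]
  split_ifs <;> simp

lemma cayGraph_adj_iff {v : ℕ} {S : Finset (ZMod v)} (hS : ∀ s ∈ S, ∀ t ∈ S, s ≠ -t)
    {x y : ZMod v} : (cayGraph S).Adj x y ↔ ∃ t ∈ S, edgeDiff s(x, y) = signClass t := by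
  simp only [cayGraph, SimpleGraph.fromRel_adj, edgeDiff_mk]
  constructor
  · rintro ⟨-, h | h⟩
    · exact ⟨x - y, h, by rw [← signClass_neg, neg_sub]⟩
    · exact ⟨y - x, h, rfl⟩
  · rintro ⟨t, ht, h⟩
    have ht0 : t ≠ 0 := fun h0 => hS t ht t ht (by simp [h0])
    refine ⟨fun hxy => ht0 ?_, ?_⟩
    · subst hxy
      rcases signClass_eq_signClass_iff.mp h with h | h <;> simpa using h.symm
    · rcases signClass_eq_signClass_iff.mp h with h | h
      · exact Or.inr (h ▸ ht)
      · exact Or.inl (by rw [← neg_sub, h, neg_neg]; exact ht)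

lemma exists_equiv_fin_strictMono {α : Type*} (B : Finset α) (r : α → ℕ)
    (hr : Set.InjOn r B) : ∃ e : Fin #B ≃ B, StrictMono fun l => r (e l) := by
  let _ : LinearOrder B :=
    LinearOrder.lift' (fun t : B => r t) fun s t h => Subtype.ext (hr s.2 t.2 h)
  let o := Fintype.orderIsoFinOfCardEq B (Fintype.card_coe B)
  exact ⟨o.toEquiv, o.strictMono⟩

theorem exists_zigzag_path {v h : ℕ} [NeZero v] {B : Finset (ZMod v)}
    (hB : ∀ s ∈ B, ∀ t ∈ B, s ≠ -t) (hBh : #B = h) :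
    ∃ (P : Fin (h + 1) → ZMod v) (e : Fin h ≃ B), Function.Injective P ∧
      ∀ l, edgeDiff s(P l.castSucc, P l.succ) = signClass (e l : ZMod v) := by
  subst hBh
  set r : ZMod v → ℕ := fun t => t.valMinAbs.natAbs
  have hr : Set.InjOn r B := fun s hs t ht hst => signClass_injOn hB hs ht <| by
    simpa only [r, signClass_natAbs_valMinAbs] using
      congrArg (fun n : ℕ => signClass (n : ZMod v)) hst
  obtain ⟨e, he⟩ := exists_equiv_fin_strictMono B r hr
  let c : ℕ → ℤ := fun i => if hi : i < #B then r (e ⟨i, hi⟩) else 0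
  have hc {i : ℕ} (hi : i < #B) : c i = r (e ⟨i, hi⟩) := dif_pos hi
  refine ⟨fun l => ((∑ i ∈ range l, (-1) ^ i * c i : ℤ) : ZMod v), e, injective_zigzag ?_ ?_ ?_,
    fun l => ?_⟩
  · intro i hi j hj hij
    rw [hc hi, hc hj]
    exact_mod_cast he (show (⟨i, hi⟩ : Fin #B) < ⟨j, hj⟩ from hij)
  · intro i hi
    have he0 : (e ⟨i, hi⟩ : ZMod v) ≠ 0 := fun h0 =>
      hB _ (e ⟨i, hi⟩).2 _ (e ⟨i, hi⟩).2 (by simp [h0])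
    rw [hc hi]
    simpa [r] using he0
  · intro i hi
    rw [hc hi]
    have := ZMod.natAbs_valMinAbs_le (e ⟨i, hi⟩ : ZMod v)
    have := Nat.div_lt_self (Nat.pos_of_neZero v) one_lt_two
    simp only [r]
    omega
  · simp only [edgeDiff_mk, Fin.val_succ, Fin.val_castSucc, sum_range_succ, Int.cast_add,
      add_sub_cancel_left, Int.cast_mul, Int.cast_pow, Int.cast_neg, Int.cast_one,
      signClass_neg_one_pow_mul, hc l.2, Int.cast_natCast, r, signClass_natAbs_valMinAbs]

theorem statement18_general (v : ℕ) (hv : 2 ≤ v) (S : Finset (ZMod v))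
    (hSred : ∀ s ∈ S, ∀ t ∈ S, s ≠ -t)
    (m n : ℕ) (hw : Fin m → ℕ) (kw : Fin n → ℕ)
    (hcard1 : S.card = ∑ i, hw i) (hcard2 : S.card = ∑ j, kw j)
    (hGR : GaleRyser hw kw) :
    ∃ (P : (i : Fin m) → Fin (hw i + 1) → ZMod v)
      (Q : (j : Fin n) → Fin (kw j + 1) → ZMod v),
      (∀ i, Function.Injective (P i)) ∧
      (∀ j, Function.Injective (Q j)) ∧
      (∀ i (l : Fin (hw i)), (cayGraph S).Adj (P i l.castSucc) (P i l.succ)) ∧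
      (∀ j (l : Fin (kw j)), (cayGraph S).Adj (Q j l.castSucc) (Q j l.succ)) ∧
      (∀ x y : ZMod v, (cayGraph S).Adj x y →
        ∃! ig : Fin m × ZMod v, ∃ l : Fin (hw ig.1),
          s(x, y) = s(P ig.1 l.castSucc + ig.2, P ig.1 l.succ + ig.2)) ∧
      (∀ x y : ZMod v, (cayGraph S).Adj x y →
        ∃! jg : Fin n × ZMod v, ∃ l : Fin (kw jg.1),
          s(x, y) = s(Q jg.1 l.castSucc + jg.2, Q jg.1 l.succ + jg.2)) ∧
      (∀ (i : Fin m) (g : ZMod v) (j : Fin n) (g' : ZMod v) (e1 e2 : Sym2 (ZMod v)),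
        (∃ l : Fin (hw i), e1 = s(P i l.castSucc + g, P i l.succ + g)) →
        (∃ l : Fin (hw i), e2 = s(P i l.castSucc + g, P i l.succ + g)) →
        (∃ l : Fin (kw j), e1 = s(Q j l.castSucc + g', Q j l.succ + g')) →
        (∃ l : Fin (kw j), e2 = s(Q j l.castSucc + g', Q j l.succ + g')) →
        e1 = e2) := by
  have : NeZero v := ⟨by omega⟩
  obtain ⟨M, hrow, hcol⟩ :=
    exists_rows_of_forall_sum_le hw kw (hcard1.symm.trans hcard2) hGR.sum_le_sum_min
  obtain ⟨B, B', hB, hB', hBcard, hB'card, hBB'⟩ :=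
    exists_orthogonal_partitions S M (by simp only [hrow, hcard1])
  have hred {T : Finset (ZMod v)} (hT : T ⊆ S) : ∀ s ∈ T, ∀ t ∈ T, s ≠ -t :=
    fun s hs t ht => hSred s (hT hs) t (hT ht)
  choose P a hPinj hP using fun i => exists_zigzag_path (hred (hB.1 i)) ((hBcard i).trans (hrow i))
  choose Q b hQinj hQ using fun j =>
    exists_zigzag_path (hred (hB'.1 j)) ((hB'card j).trans (hcol j))
  refine ⟨P, Q, hPinj, hQinj, fun i l => (cayGraph_adj_iff hSred).mpr ⟨_, hB.1 i (a i l).2, hP i l⟩,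
    fun j l => (cayGraph_adj_iff hSred).mpr ⟨_, hB'.1 j (b j l).2, hQ j l⟩, fun x y hxy => ?_,
    fun x y hxy => ?_, fun i g j g' _ _ => eq_of_mem_translates hSred (hB.1 i) (hB'.1 j) (hBB' i j)
      (a i) (b j) (hP i) (hQ j)⟩
  all_goals obtain ⟨t, ht, hxy⟩ := (cayGraph_adj_iff hSred).mp hxy
  · exact existsUnique_translate_of_partition hSred hB a hP ht hxy
  · exact existsUnique_translate_of_partition hSred hB' b hQ ht hxy

/-- Let `v ≥ 2`, let `S ⊆ Z_v \ {0}` be reduced, and let `𝐡, 𝐤` be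
sequences of positive integers with `|S| = Σ𝐡 = Σ𝐤` satisfying the Gale–Ryser
condition. Then `Cay(Z_v, S)` admits two `Z_v`-regular orthogonal path decompositions:
one whose translated paths `P i + g` have lengths `hw i`, and one whose translated
paths `Q j + g` have lengths `kw j`; every edge lies in exactly one translate of each
family, and any two translates from different families share at most one edge. -/
theorem statement18 (v : ℕ) (hv : 2 ≤ v) (S : Finset (ZMod v))
    (hS0 : (0 : ZMod v) ∉ S) (hSred : ∀ s ∈ S, ∀ t ∈ S, s ≠ -t)
    (m n : ℕ) (hw : Fin m → ℕ) (kw : Fin n → ℕ)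
    (hwpos : ∀ i, 0 < hw i) (kwpos : ∀ j, 0 < kw j)
    (hcard1 : S.card = ∑ i, hw i) (hcard2 : S.card = ∑ j, kw j)
    (hGR : GaleRyser hw kw) :
    ∃ (P : (i : Fin m) → Fin (hw i + 1) → ZMod v)
      (Q : (j : Fin n) → Fin (kw j + 1) → ZMod v),
      (∀ i, Function.Injective (P i)) ∧
      (∀ j, Function.Injective (Q j)) ∧
      (∀ i (l : Fin (hw i)), (cayGraph S).Adj (P i l.castSucc) (P i l.succ)) ∧
      (∀ j (l : Fin (kw j)), (cayGraph S).Adj (Q j l.castSucc) (Q j l.succ)) ∧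
      (∀ x y : ZMod v, (cayGraph S).Adj x y →
        ∃! ig : Fin m × ZMod v, ∃ l : Fin (hw ig.1),
          s(x, y) = s(P ig.1 l.castSucc + ig.2, P ig.1 l.succ + ig.2)) ∧
      (∀ x y : ZMod v, (cayGraph S).Adj x y →
        ∃! jg : Fin n × ZMod v, ∃ l : Fin (kw jg.1),
          s(x, y) = s(Q jg.1 l.castSucc + jg.2, Q jg.1 l.succ + jg.2)) ∧
      (∀ (i : Fin m) (g : ZMod v) (j : Fin n) (g' : ZMod v) (e1 e2 : Sym2 (ZMod v)),
        (∃ l : Fin (hw i), e1 = s(P i l.castSucc + g, P i l.succ + g)) →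
        (∃ l : Fin (hw i), e2 = s(P i l.castSucc + g, P i l.succ + g)) →
        (∃ l : Fin (kw j), e1 = s(Q j l.castSucc + g', Q j l.succ + g')) →
        (∃ l : Fin (kw j), e2 = s(Q j l.castSucc + g', Q j l.succ + g')) →
        e1 = e2) :=
  statement18_general v hv S hSred m n hw kw hcard1 hcard2 hGR
end
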